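/- arXiv:2507.06158 — 7 statements merged into one kernel-verified Lean document; each statement's English description precedes it below -/
import Mathlib

section
/- The set 𝒟 = {(ν, 0)ᵀ : ν ∈ ℤ, 0 ≤ ν ≤ |b| − 1} is a complete residue system of ℤ²[A]/Aℤ²[A]; that is, every x ∈ ℤ²[A] satisfies x − d ∈ Aℤ²[A] for exactly one element d ∈ 𝒟. -/
/-!
Since `A e₁ = e₂`, the module `ℤ²[A]` is the image of `ℤ[X]` under `f ↦ f(A) e₁`, a map turning
multiplication by `X` into `A`. Its kernel is `q ℤ[X]`: as `e₁` is a cyclic vector, `f(A) e₁ = 0`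
forces `f(A) = 0`, i.e. `p = minpoly A` divides `f` in `ℚ[X]`, i.e. (Gauss) the primitive `q` divides
`f` in `ℤ[X]`. Hence `ℤ²[A] / A ℤ²[A] ≅ ℤ[X] / (X, q) ≅ ℤ / b`, the class of `f(A) e₁` being
`f(0) mod b`, and the digit `(ν, 0)ᵀ` is the image of the constant `ν`.
-/

open Matrix Polynomial

noncomputable section

/-- `ℤⁿ[A]`: the set of all vectors of the form `v₀ + A v₁ + ⋯ + A^k v_k`
with integer vectors `v_j`; the smallest `A`-invariant `ℤ`-module containing `ℤⁿ`. -/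
def intSpan {n : ℕ} (A : Matrix (Fin n) (Fin n) ℚ) : Set (Fin n → ℚ) :=
  {x | ∃ (k : ℕ) (v : ℕ → Fin n → ℤ),
    x = ∑ j ∈ Finset.range (k + 1), (A ^ j).mulVec (fun i => ((v j i : ℚ)))}

/-- The digit vector `(ν, 0)ᵀ`. -/
def digitVec (ν : ℤ) : Fin 2 → ℚ := ![(ν : ℚ), 0]

theorem existsUnique_residue_of_ker_eq_span {M : Type*} [AddCommGroup M] (φ : ℤ[X] →+ M)
    (T : M → M) (hT : ∀ f, φ (X * f) = T (φ f)) {q : ℤ[X]} (hker : ∀ f, φ f = 0 ↔ q ∣ f)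
    (hq : q.coeff 0 ≠ 0) :
    ∀ x ∈ Set.range φ, ∃! d : M, (∃ ν : ℤ, 0 ≤ ν ∧ ν ≤ |q.coeff 0| - 1 ∧ d = φ (C ν)) ∧
      ∃ y ∈ Set.range φ, x - d = T y := by
  rintro x ⟨f, rfl⟩
  set b := q.coeff 0
  have hb : 0 < |b| := abs_pos.mpr hq
  have hdvd_of_eq : ∀ ν g, φ f - φ (C ν) = T (φ g) → b ∣ f.coeff 0 - ν := by
    intro ν g h
    obtain ⟨s, hs⟩ : q ∣ f - C ν - X * g := (hker _).mp (by rw [map_sub, map_sub, h, hT, sub_self])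
    exact ⟨s.coeff 0, by simpa [mul_coeff_zero] using congrArg (coeff · 0) hs⟩
  obtain ⟨t, ht⟩ : b ∣ f.coeff 0 - f.coeff 0 % |b| := (abs_dvd b _).mp (Int.mod_modEq _ _).dvd
  obtain ⟨g, hg⟩ : X ∣ f - C (f.coeff 0 % |b|) - q * C t := by
    rw [X_dvd_iff]
    simp only [coeff_sub, coeff_C_zero, mul_coeff_zero, ht]
    exact sub_self _
  refine ⟨φ (C (f.coeff 0 % |b|)), ⟨⟨_, Int.emod_nonneg _ hb.ne',
    by linarith [Int.emod_lt_of_pos (f.coeff 0) hb], rfl⟩, φ g, ⟨g, rfl⟩, ?_⟩, ?_⟩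
  · rw [← hT, ← hg, map_sub, map_sub, (hker _).mpr (dvd_mul_right q _), sub_zero]
  · rintro _ ⟨⟨ν, hν0, hν1, rfl⟩, _, ⟨g', rfl⟩, hg'⟩
    have hmod : ν ≡ f.coeff 0 [ZMOD |b|] :=
      Int.modEq_iff_dvd.mpr ((abs_dvd b _).mpr (hdvd_of_eq ν g' hg'))
    rw [← hmod, Int.emod_eq_of_lt hν0 (by linarith)]

theorem aeval_eq_zero_iff_dvd {B : Type*} [Ring B] [Algebra ℚ B] {x : B} {q : ℤ[X]}
    (hq : q.IsPrimitive) {c : ℚ} (hc : c ≠ 0)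
    (hqx : q.map (Int.castRingHom ℚ) = C c * minpoly ℚ x) (f : ℤ[X]) :
    aeval x f = 0 ↔ q ∣ f := by
  rw [IsPrimitive.Int.dvd_iff_map_cast_dvd_map_cast q f hq, hqx,
    (isUnit_C.mpr hc.isUnit).mul_left_dvd, minpoly.dvd_iff, ← algebraMap_int_eq,
    aeval_map_algebraMap]

theorem isPrimitive_of_gcd_eq_one {c a b : ℤ} (h : Int.gcd c (Int.gcd a b) = 1) :
    (C c * X ^ 2 + C a * X + C b).IsPrimitive := by
  intro r hr
  rw [C_dvd_iff_dvd_coeff] at hr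
  have h2 := hr 2
  have h1 := hr 1
  have h0 := hr 0
  simp only [coeff_add, coeff_C_mul, coeff_X_pow, coeff_C, coeff_X] at h2 h1 h0
  norm_num at h2 h1 h0
  have hr1 : r ∣ ((Int.gcd c (Int.gcd a b) : ℤ)) := Int.dvd_coe_gcd h2 (Int.dvd_coe_gcd h1 h0)
  rw [h] at hr1
  exact isUnit_of_dvd_one (by exact_mod_cast hr1)

theorem coeff_zero_ne_zero_of_irreducible {R : Type*} [CommRing R] [IsDomain R] {p : R[X]}
    (hp : Irreducible p) (hdeg : 1 < p.degree) : p.coeff 0 ≠ 0 := fun h0 => by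
  have := degree_eq_degree_of_associated (irreducible_X.associated_of_dvd hp (X_dvd_iff.mpr h0))
  rw [degree_X] at this
  exact hdeg.ne this

section evalVec

variable {R : Type*} [CommRing R] {n : Type*} [Fintype n] [DecidableEq n]

def evalVec (A : Matrix n n R) (v : n → R) : ℤ[X] →+ (n → R) :=
  AddMonoidHom.mk' (fun f => aeval A f *ᵥ v) fun f g => by rw [map_add, add_mulVec]

variable (A : Matrix n n R) (v : n → R)

theorem evalVec_apply (f : ℤ[X]) : evalVec A v f = aeval A f *ᵥ v := rfl

theorem evalVec_X_pow_mul (k : ℕ) (f : ℤ[X]) :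
    evalVec A v (X ^ k * f) = (A ^ k) *ᵥ evalVec A v f := by
  rw [evalVec_apply, evalVec_apply, map_mul, map_pow, aeval_X, mulVec_mulVec]

theorem evalVec_X_mul (f : ℤ[X]) : evalVec A v (X * f) = A *ᵥ evalVec A v f := by
  simpa using evalVec_X_pow_mul A v 1 f

theorem evalVec_C (m : ℤ) : evalVec A v (C m) = (m : R) • v := by
  rw [evalVec_apply, aeval_C, eq_intCast, intCast_mulVec]

end evalVec

theorem minpoly_eq_charpoly_of_irreducible {K n : Type*} [Field K] [Fintype n] [DecidableEq n]
    [Nonempty n] {M : Matrix n n K} (hirr : Irreducible M.charpoly) : minpoly K M = M.charpoly :=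
  (minpoly.eq_of_irreducible_of_monic hirr (aeval_self_charpoly M) (charpoly_monic M)).symm

section FinTwo

variable {R : Type*} [CommRing R]

theorem companion_mulVec_vecCons_one_zero (α β : R) :
    (!![0, -β; 1, -α] : Matrix (Fin 2) (Fin 2) R) *ᵥ ![1, 0] = ![0, 1] := by
  ext i; fin_cases i <;> simp

theorem charpoly_companion_fin_two [Nontrivial R] (α β : R) :
    (!![0, -β; 1, -α] : Matrix (Fin 2) (Fin 2) R).charpoly = X ^ 2 + C α * X + C β := by
  simp [charpoly_fin_two, trace_fin_two, det_fin_two]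

theorem minpoly_companion_fin_two {K : Type*} [Field K] {α β : K}
    (hirr : Irreducible (X ^ 2 + C α * X + C β)) :
    minpoly K (!![0, -β; 1, -α] : Matrix (Fin 2) (Fin 2) K) = X ^ 2 + C α * X + C β := by
  rw [← charpoly_companion_fin_two α β] at hirr ⊢
  exact minpoly_eq_charpoly_of_irreducible hirr

theorem eq_zero_of_commute_of_mulVec_eq_zero {A M : Matrix (Fin 2) (Fin 2) R}
    (hA : A *ᵥ ![1, 0] = ![0, 1]) (hAM : Commute A M) (hM : M *ᵥ ![1, 0] = 0) : M = 0 := by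
  have hM' : M *ᵥ ![0, 1] = 0 := by
    rw [← hA, mulVec_mulVec, ← hAM.eq, ← mulVec_mulVec, hM, mulVec_zero]
  ext i j
  fin_cases j
  · simpa [mulVec, dotProduct] using congrFun hM i
  · simpa [mulVec, dotProduct] using congrFun hM' i

theorem evalVec_eq_zero_iff {A : Matrix (Fin 2) (Fin 2) R} (hA : A *ᵥ ![1, 0] = ![0, 1])
    (f : ℤ[X]) : evalVec A ![1, 0] f = 0 ↔ aeval A f = 0 := by
  refine ⟨fun h => eq_zero_of_commute_of_mulVec_eq_zero hA ?_ h, fun h => by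
    rw [evalVec_apply, h, zero_mulVec]⟩
  simpa using (commute_X f).map (aeval A)

end FinTwo

theorem intSpan_eq_range {A : Matrix (Fin 2) (Fin 2) ℚ} (hA : A *ᵥ ![1, 0] = ![0, 1]) :
    intSpan A = Set.range (evalVec A ![1, 0]) := by
  ext x
  constructor
  · rintro ⟨k, v, rfl⟩
    refine ⟨∑ j ∈ Finset.range (k + 1), X ^ j * (C (v j 0) + X * C (v j 1)), ?_⟩
    rw [map_sum]
    refine Finset.sum_congr rfl fun j _ => ?_
    rw [evalVec_X_pow_mul, map_add, evalVec_X_mul, evalVec_C, evalVec_C, mulVec_smul, hA]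
    congr 1
    ext i
    fin_cases i <;> simp
  · rintro ⟨f, rfl⟩
    refine ⟨f.natDegree, fun j => ![f.coeff j, 0], ?_⟩
    rw [evalVec_apply, aeval_eq_sum_range, sum_mulVec]
    refine Finset.sum_congr rfl fun j _ => ?_
    have hcol : (fun i => ((![f.coeff j, 0] i : ℤ) : ℚ)) = (f.coeff j : ℚ) • ![1, 0] := by
      ext i; fin_cases i <;> simp
    rw [hcol, mulVec_smul, smul_mulVec, Int.cast_smul_eq_zsmul]

theorem digitVec_eq_evalVec (A : Matrix (Fin 2) (Fin 2) ℚ) (ν : ℤ) :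
    digitVec ν = evalVec A ![1, 0] (C ν) := by
  rw [evalVec_C]
  ext i
  fin_cases i <;> simp [digitVec]

/-- `𝒟 = {(ν,0)ᵀ : 0 ≤ ν ≤ |b| - 1}` is a complete residue system
of `ℤ²[A]/Aℤ²[A]`. -/
theorem stmt0 (α β : ℚ)
    (hirr : Irreducible (X ^ 2 + C α * X + C β : ℚ[X]))
    (c a b : ℤ) (hc : 0 < c)
    (ha : (a : ℚ) = (c : ℚ) * α) (hb : (b : ℚ) = (c : ℚ) * β)
    (hprim : Int.gcd c (Int.gcd a b) = 1)
    (A : Matrix (Fin 2) (Fin 2) ℚ) (hA : A = !![0, -β; 1, -α]) :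
    ∀ x ∈ intSpan A, ∃! d : Fin 2 → ℚ,
      (∃ ν : ℤ, 0 ≤ ν ∧ ν ≤ |b| - 1 ∧ d = digitVec ν) ∧
      ∃ y ∈ intSpan A, x - d = A.mulVec y := by
  have hA1 : A *ᵥ ![1, 0] = ![0, 1] := hA ▸ companion_mulVec_vecCons_one_zero α β
  have hq : (C c * X ^ 2 + C a * X + C b).map (Int.castRingHom ℚ) = C (c : ℚ) * minpoly ℚ A := by
    simp only [hA, minpoly_companion_fin_two hirr, Polynomial.map_add, Polynomial.map_mul,
      Polynomial.map_pow, Polynomial.map_C, Polynomial.map_X, Int.coe_castRingHom, ha, hb, C_mul]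
    ring
  have hb0 : b ≠ 0 := by
    have hβ := coeff_zero_ne_zero_of_irreducible hirr (by
      rw [show (X ^ 2 + C α * X + C β : ℚ[X]).degree = 2 by compute_degree!]; norm_num)
    simp only [coeff_add, coeff_C_zero, coeff_C_mul_X, coeff_X_pow] at hβ
    exact_mod_cast (show (b : ℚ) ≠ 0 by simp_all [hc.ne'])
  have hcoeff : (C c * X ^ 2 + C a * X + C b).coeff 0 = b := by simp
  have hresidue := existsUnique_residue_of_ker_eq_span _ _ (evalVec_X_mul A ![1, 0])
    (fun f => (evalVec_eq_zero_iff hA1 f).trans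
      (aeval_eq_zero_iff_dvd (isPrimitive_of_gcd_eq_one hprim) (by positivity) hq f))
    (by rwa [hcoeff])
  rw [intSpan_eq_range hA1]
  simp_rw [digitVec_eq_evalVec A]
  rwa [hcoeff] at hresidue
end
end

section
/- If 0 < −α < −β − 1, then each of the vectors (0, 0)ᵀ, −(a, c)ᵀ, and −(c, 0)ᵀ is a periodic point of Φ; in particular, the attractor 𝒜_Φ contains {(0,0)ᵀ, −(a, c)ᵀ, −(c, 0)ᵀ}. -/
open Matrix Polynomial

noncomputable section

/-!
Since `A (-c, 0)ᵀ = (0, -c)ᵀ` and `A (-a, -c)ᵀ = (b, 0)ᵀ`, we have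
`-(a, c) = (-a, 0) + A (-(c, 0))` and `-(c, 0) = (-b - c, 0) + A (-(a, c))`, and the hypotheses
`0 < -α < -β - 1` make `-a` and `-b - c` admissible digits; so `Φ` fixes `0` and swaps the other
two points, provided `Φ x` can be read off from any such expansion of `x`.

That is uniqueness of digits: if `A z = (m, 0)ᵀ` with `z ∈ ℤ²[A] = ℤ[A] e₁`, write `z = g(A) e₁`
with `g ∈ ℤ[X]`. Then `m - X g` annihilates the cyclic vector `e₁`, so `p ∣ m - X g` in `ℚ[X]`;
by Gauss's lemma the primitive `q` divides it in `ℤ[X]`, and evaluating at `0` gives `b ∣ m`.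
-/

lemma isPrimitive_quadratic {a b c : ℤ} (h : Int.gcd c (Int.gcd a b) = 1) :
    (C c * X ^ 2 + C a * X + C b : ℤ[X]).IsPrimitive := by
  intro r hr
  simp only [C_dvd_iff_dvd_coeff] at hr
  have h0 := hr 0
  have h1 := hr 1
  have h2 := hr 2
  simp only [coeff_add, coeff_C_mul, coeff_X_pow, coeff_X, coeff_C] at h0 h1 h2
  norm_num at h0 h1 h2
  exact isUnit_of_dvd_one (by simpa [h] using Int.dvd_coe_gcd h2 (Int.dvd_coe_gcd h1 h0))

lemma vecCons_intCast_mem_intSpan {A : Matrix (Fin 2) (Fin 2) ℚ} (x y : ℤ) :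
    ![(x : ℚ), y] ∈ intSpan A :=
  ⟨0, fun _ => ![x, y], by ext i; fin_cases i <;> simp⟩

section Companion

variable {α β : ℚ}

local notation "𝔸" => (!![0, -β; 1, -α] : Matrix (Fin 2) (Fin 2) ℚ)

lemma companion_mulVec (x y : ℚ) :
    𝔸 *ᵥ ![x, y] = ![-β * y, x - α * y] := by
  ext i; fin_cases i <;> simp [Matrix.mulVec, dotProduct, Fin.sum_univ_two, sub_eq_add_neg]

lemma aeval_companion_self :
    aeval 𝔸 (X ^ 2 + C α * X + C β) = 0 := by
  simp only [map_add, _root_.map_mul, map_pow, aeval_X, aeval_C]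
  ext i j
  fin_cases i <;> fin_cases j <;>
    simp [pow_two, Matrix.mul_apply, Matrix.algebraMap_matrix_apply]
  ring

lemma aeval_companion_mulVec_of_degree_le_one {r : ℚ[X]} (hr : r.degree ≤ 1) :
    aeval 𝔸 r *ᵥ ![1, 0] = ![r.coeff 0, r.coeff 1] := by
  rw [eq_X_add_C_of_degree_le_one hr]
  simp only [map_add, _root_.map_mul, aeval_X, aeval_C, Matrix.add_mulVec,
    ← Matrix.mulVec_mulVec, Algebra.algebraMap_eq_smul_one, Matrix.smul_mulVec, Matrix.one_mulVec]
  ext i; fin_cases i <;> simp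

lemma quadratic_dvd_of_aeval_companion_mulVec_eq_zero {g : ℚ[X]}
    (hg : aeval 𝔸 g *ᵥ ![1, 0] = 0) : X ^ 2 + C α * X + C β ∣ g := by
  have hmonic : (X ^ 2 + C α * X + C β : ℚ[X]).Monic := by monicity!
  have hdeg : (X ^ 2 + C α * X + C β : ℚ[X]).natDegree = 2 := by compute_degree!
  rw [← modByMonic_eq_zero_iff_dvd hmonic]
  set r := g %ₘ (X ^ 2 + C α * X + C β)
  have hr : r.degree ≤ 1 := by
    have := degree_modByMonic_lt g hmonic
    rw [degree_eq_natDegree hmonic.ne_zero, hdeg] at this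
    exact Order.le_of_lt_succ this
  have hrg : aeval 𝔸 r *ᵥ ![1, 0] = 0 := by
    rw [← hg, ← modByMonic_add_div g (X ^ 2 + C α * X + C β), map_add, _root_.map_mul,
      aeval_companion_self, zero_mul, add_zero]
  rw [aeval_companion_mulVec_of_degree_le_one hr] at hrg
  rw [eq_X_add_C_of_degree_le_one hr, show r.coeff 0 = 0 from congrFun hrg 0,
    show r.coeff 1 = 0 from congrFun hrg 1]
  simp

lemma exists_intPoly_of_mem_intSpan {x : Fin 2 → ℚ} (hx : x ∈ intSpan 𝔸) :
    ∃ g : ℤ[X], x = aeval 𝔸 (g.map (Int.castRingHom ℚ)) *ᵥ ![1, 0] := by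
  obtain ⟨k, v, rfl⟩ := hx
  refine ⟨∑ j ∈ Finset.range (k + 1), X ^ j * (C (v j 0) + C (v j 1) * X), ?_⟩
  simp only [Polynomial.map_sum, map_sum, Matrix.sum_mulVec]
  refine Finset.sum_congr rfl fun j _ => ?_
  have hdeg : (C (v j 0 : ℚ) + C (v j 1 : ℚ) * X).degree ≤ 1 := by compute_degree
  have hv : (fun i => (v j i : ℚ)) = ![(v j 0 : ℚ), (v j 1 : ℚ)] := by
    ext i; fin_cases i <;> rfl
  simp only [Polynomial.map_mul, Polynomial.map_pow, Polynomial.map_add, Polynomial.map_C,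
    Polynomial.map_X, Int.coe_castRingHom, _root_.map_mul, map_pow, aeval_X,
    ← Matrix.mulVec_mulVec, aeval_companion_mulVec_of_degree_le_one hdeg, hv, coeff_add,
    coeff_C, coeff_C_mul, coeff_X]
  simp

lemma dvd_of_companion_mulVec_eq_digitVec {c a b : ℤ} (hc : c ≠ 0)
    (ha : (a : ℚ) = c * α) (hb : (b : ℚ) = c * β) (hprim : Int.gcd c (Int.gcd a b) = 1)
    {g : ℤ[X]} {m : ℤ}
    (h : 𝔸 *ᵥ (aeval 𝔸 (g.map (Int.castRingHom ℚ)) *ᵥ ![1, 0]) = digitVec m) :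
    b ∣ m := by
  set q : ℤ[X] := C c * X ^ 2 + C a * X + C b
  have hq : q.map (Int.castRingHom ℚ) = C (c : ℚ) * (X ^ 2 + C α * X + C β) := by
    simp only [q, Polynomial.map_add, Polynomial.map_mul, Polynomial.map_pow, Polynomial.map_X,
      Polynomial.map_C, Int.coe_castRingHom, ha, hb, C_mul]
    ring
  have hP : X ^ 2 + C α * X + C β ∣ (C m - X * g).map (Int.castRingHom ℚ) := by
    apply quadratic_dvd_of_aeval_companion_mulVec_eq_zero
    rw [Polynomial.map_sub, Polynomial.map_mul, Polynomial.map_X, Polynomial.map_C, map_sub,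
      _root_.map_mul, aeval_X, Matrix.sub_mulVec, ← Matrix.mulVec_mulVec, h,
      aeval_companion_mulVec_of_degree_le_one (degree_C_le.trans zero_le_one)]
    simp only [coeff_C]
    ext i; fin_cases i <;> simp [digitVec]
  obtain ⟨N, hN⟩ : q ∣ C m - X * g := by
    rw [IsPrimitive.Int.dvd_iff_map_cast_dvd_map_cast _ _ (isPrimitive_quadratic hprim), hq]
    exact (isUnit_C.mpr (Int.cast_ne_zero.mpr hc).isUnit).mul_left_dvd.mpr hP
  refine ⟨N.eval 0, ?_⟩
  simpa [q] using congrArg (eval 0) hN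

lemma eq_of_digitVec_add_companion_mulVec_eq {c a b : ℤ} (hc : c ≠ 0)
    (ha : (a : ℚ) = c * α) (hb : (b : ℚ) = c * β) (hprim : Int.gcd c (Int.gcd a b) = 1)
    {ν ν' : ℤ} (hν : 0 ≤ ν ∧ ν ≤ |b| - 1) (hν' : 0 ≤ ν' ∧ ν' ≤ |b| - 1)
    {z z' : Fin 2 → ℚ} (hz : z ∈ intSpan 𝔸) (hz' : z' ∈ intSpan 𝔸)
    (h : digitVec ν + 𝔸 *ᵥ z = digitVec ν' + 𝔸 *ᵥ z') :
    z = z' := by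
  obtain ⟨g, rfl⟩ := exists_intPoly_of_mem_intSpan hz
  obtain ⟨g', rfl⟩ := exists_intPoly_of_mem_intSpan hz'
  have hdiff : 𝔸 *ᵥ (aeval 𝔸 ((g - g').map (Int.castRingHom ℚ)) *ᵥ ![1, 0]) =
      digitVec (ν' - ν) := by
    rw [Polynomial.map_sub, map_sub, Matrix.sub_mulVec, Matrix.mulVec_sub]
    ext i
    have hi := congrFun h i
    fin_cases i <;> simp [digitVec] at hi ⊢ <;> linarith
  have hb_dvd : |b| ∣ ν' - ν :=
    (abs_dvd _ _).mpr (dvd_of_companion_mulVec_eq_digitVec hc ha hb hprim hdiff)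
  obtain rfl : ν = ν' := by
    have := Int.eq_zero_of_abs_lt_dvd hb_dvd (by rw [abs_lt]; omega)
    omega
  have hβ : β ≠ 0 := by
    rintro rfl
    have : b = 0 := by exact_mod_cast hb.trans (mul_zero _)
    simp [this] at hν
    omega
  refine Matrix.mulVec_injective_iff_isUnit.mpr ?_ (add_left_cancel h)
  simpa [Matrix.isUnit_iff_isUnit_det, Matrix.det_fin_two_of] using hβ

lemma apply_eq_of_eq_digitVec_add_companion_mulVec {c a b : ℤ} (hc : c ≠ 0)
    (ha : (a : ℚ) = c * α) (hb : (b : ℚ) = c * β) (hprim : Int.gcd c (Int.gcd a b) = 1)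
    {Φ : (Fin 2 → ℚ) → Fin 2 → ℚ}
    (hΦmem : ∀ x ∈ intSpan 𝔸, Φ x ∈ intSpan 𝔸)
    (hΦ : ∀ x ∈ intSpan 𝔸, ∃ ν : ℤ, 0 ≤ ν ∧ ν ≤ |b| - 1 ∧ x = digitVec ν + 𝔸 *ᵥ Φ x)
    {x z : Fin 2 → ℚ} {ν : ℤ} (hx : x ∈ intSpan 𝔸) (hz : z ∈ intSpan 𝔸)
    (hν : 0 ≤ ν ∧ ν ≤ |b| - 1) (hxz : x = digitVec ν + 𝔸 *ᵥ z) :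
    Φ x = z := by
  obtain ⟨μ, hμ₀, hμ, hxΦ⟩ := hΦ x hx
  exact eq_of_digitVec_add_companion_mulVec_eq hc ha hb hprim ⟨hμ₀, hμ⟩ hν (hΦmem x hx) hz
    (hxΦ.symm.trans hxz)

end Companion

theorem stmt6_general (α β : ℚ) (hα1 : 0 < -α) (hα2 : -α < -β - 1)
    (c a b : ℤ) (hc : 0 < c)
    (ha : (a : ℚ) = (c : ℚ) * α) (hb : (b : ℚ) = (c : ℚ) * β)
    (hprim : Int.gcd c (Int.gcd a b) = 1)
    (A : Matrix (Fin 2) (Fin 2) ℚ) (hA : A = !![0, -β; 1, -α])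
    (Φ : (Fin 2 → ℚ) → Fin 2 → ℚ)
    (hΦmem : ∀ x ∈ intSpan A, Φ x ∈ intSpan A)
    (hΦ : ∀ x ∈ intSpan A, ∃ ν : ℤ, 0 ≤ ν ∧ ν ≤ |b| - 1 ∧
      x = digitVec ν + A.mulVec (Φ x))
     :
    ∀ y ∈ ({0, ![(-a : ℚ), (-c : ℚ)], ![(-c : ℚ), 0]} : Set (Fin 2 → ℚ)),
      y ∈ intSpan A ∧ ∃ r : ℕ, 1 ≤ r ∧ Φ^[r] y = y := by
  subst hA
  have hcq : (0 : ℚ) < c := by exact_mod_cast hc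
  have hb₀ : b < 0 := by exact_mod_cast (show (b : ℚ) < 0 by rw [hb]; nlinarith)
  have ha₀ : a < 0 := by exact_mod_cast (show (a : ℚ) < 0 by rw [ha]; nlinarith)
  have hab : -a < -b - c := by
    exact_mod_cast (show -(a : ℚ) < -b - c by rw [ha, hb]; nlinarith)
  have habs : |b| = -b := abs_of_neg hb₀
  have hΦ_eq {x z ν} := apply_eq_of_eq_digitVec_add_companion_mulVec (x := x) (z := z) (ν := ν)
    hc.ne' ha hb hprim hΦmem hΦ
  have h0 : (0 : Fin 2 → ℚ) ∈ intSpan !![0, -β; 1, -α] :=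
    ⟨0, 0, by ext i; fin_cases i <;> simp⟩
  have hu : ![(-a : ℚ), (-c : ℚ)] ∈ intSpan !![0, -β; 1, -α] := by
    simpa using vecCons_intCast_mem_intSpan (A := !![0, -β; 1, -α]) (-a) (-c)
  have hw : ![(-c : ℚ), 0] ∈ intSpan !![0, -β; 1, -α] := by
    simpa using vecCons_intCast_mem_intSpan (A := !![0, -β; 1, -α]) (-c) 0
  have hΦ0 : Φ 0 = 0 := hΦ_eq h0 h0 (ν := 0) ⟨le_rfl, by omega⟩ (by
    ext i; fin_cases i <;> simp [digitVec])
  have hΦu : Φ ![(-a : ℚ), (-c : ℚ)] = ![(-c : ℚ), 0] :=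
    hΦ_eq hu hw (ν := -a) ⟨by omega, by omega⟩ (by
      rw [companion_mulVec]; ext i; fin_cases i <;> simp [digitVec])
  have hΦw : Φ ![(-c : ℚ), 0] = ![(-a : ℚ), (-c : ℚ)] :=
    hΦ_eq hw hu (ν := -b - c) ⟨by omega, by omega⟩ (by
      rw [companion_mulVec]; ext i; fin_cases i <;> simp [digitVec] <;> linarith)
  rintro y (rfl | rfl | rfl)
  · exact ⟨h0, 1, le_rfl, hΦ0⟩
  · exact ⟨hu, 2, one_le_two, by simp [hΦu, hΦw]⟩
  · exact ⟨hw, 2, one_le_two, by simp [hΦu, hΦw]⟩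

/-- if `0 < -α < -β - 1`, then `(0,0)ᵀ`, `-(a,c)ᵀ` and `-(c,0)ᵀ`
are periodic points of `Φ`, i.e. the attractor contains them. -/
theorem stmt6 (α β : ℚ) (hα1 : 0 < -α) (hα2 : -α < -β - 1)
    (hirr : Irreducible (X ^ 2 + C α * X + C β : ℚ[X]))
    (hexp : ∀ z : ℂ, z ^ 2 + (α : ℂ) * z + (β : ℂ) = 0 → 1 < ‖z‖)
    (c a b : ℤ) (hc : 0 < c)
    (ha : (a : ℚ) = (c : ℚ) * α) (hb : (b : ℚ) = (c : ℚ) * β)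
    (hprim : Int.gcd c (Int.gcd a b) = 1)
    (A : Matrix (Fin 2) (Fin 2) ℚ) (hA : A = !![0, -β; 1, -α])
    (Φ : (Fin 2 → ℚ) → Fin 2 → ℚ)
    (hΦmem : ∀ x ∈ intSpan A, Φ x ∈ intSpan A)
    (hΦ : ∀ x ∈ intSpan A, ∃ ν : ℤ, 0 ≤ ν ∧ ν ≤ |b| - 1 ∧
      x = digitVec ν + A.mulVec (Φ x))
     :
    ∀ y ∈ ({0, ![(-a : ℚ), (-c : ℚ)], ![(-c : ℚ), 0]} : Set (Fin 2 → ℚ)),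
      y ∈ intSpan A ∧ ∃ r : ℕ, 1 ≤ r ∧ Φ^[r] y = y :=
  stmt6_general α β hα1 hα2 c a b hc ha hb hprim A hA Φ hΦmem hΦ
end
end

section
/- For each r ∈ ℤ[x]/Pℤ[x] there exist a minimal k ∈ ℕ and integers r_0, …, r_k with r_i ∈ {0, 1, …, |p_d| − 1} for every i with d ≤ i ≤ k, such that r = Σ_{i=0}^k r_i X^i, where X = x + Pℤ[x]; moreover, for this minimal k the integers r_0, …, r_k are uniquely determined. -/
open Polynomial

noncomputable section

/-- `r = Σ_{i=0}^k f i · Xⁱ` in `ℤ[x]/Pℤ[x]`, with `f i ∈ {0, …, |p_d| - 1}`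
for `d ≤ i ≤ k`. -/
def IsRepr (P : Polynomial ℤ) (d : ℕ) (r : Polynomial ℤ ⧸ Ideal.span {P})
    (k : ℕ) (f : ℕ → ℤ) : Prop :=
  (∀ i, d ≤ i → i ≤ k → 0 ≤ f i ∧ f i ≤ |P.coeff d| - 1) ∧
  r = ∑ i ∈ Finset.range (k + 1),
    (f i : Polynomial ℤ ⧸ Ideal.span {P}) *
      (Ideal.Quotient.mk (Ideal.span {P}) X) ^ i

lemma coeff_sum_repr (k : ℕ) (f : ℕ → ℤ) (n : ℕ) :
    (∑ i ∈ Finset.range (k + 1), C (f i) * X ^ i : Polynomial ℤ).coeff n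
      = if n ≤ k then f n else 0 := by
  rw [Polynomial.finset_sum_coeff]
  simp only [coeff_C_mul, coeff_X_pow, mul_ite, mul_one, mul_zero]
  rw [Finset.sum_ite_eq (Finset.range (k + 1)) n f]
  simp [Nat.lt_succ_iff]

lemma mk_eq_sum (P : Polynomial ℤ) (k : ℕ) (f : ℕ → ℤ) :
    Ideal.Quotient.mk (Ideal.span {P}) (∑ i ∈ Finset.range (k + 1), C (f i) * X ^ i)
      = ∑ i ∈ Finset.range (k + 1),
          (f i : Polynomial ℤ ⧸ Ideal.span {P}) *
            (Ideal.Quotient.mk (Ideal.span {P}) X) ^ i := by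
  rw [map_sum]
  refine Finset.sum_congr rfl fun i _ => ?_
  rw [map_mul, map_pow]
  congr 1

lemma reduce (d : ℕ) (P : Polynomial ℤ) (hdeg : P.natDegree = d)
    (hlead : P.coeff d ≠ 0) :
    ∀ (j : ℕ) (Q : Polynomial ℤ),
      (∀ i, d + j ≤ i → 0 ≤ Q.coeff i ∧ Q.coeff i < |P.coeff d|) →
      ∃ Q', P ∣ (Q - Q') ∧ ∀ i, d ≤ i → 0 ≤ Q'.coeff i ∧ Q'.coeff i < |P.coeff d| := by
  intro j
  induction j with
  | zero => exact fun Q h => ⟨Q, by simp, fun i hi => h i (by omega)⟩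
  | succ j ih =>
    intro Q h
    set c := P.coeff d with hc
    have habs : 0 < |c| := abs_pos.mpr hlead
    set n := d + j with hn
    set s := Q.coeff n % |c| with hs
    have hs0 : 0 ≤ s := Int.emod_nonneg _ (by omega)
    have hs1 : s < |c| := Int.emod_lt_of_pos _ habs
    have hdvd : c ∣ Q.coeff n - s := by
      refine (abs_dvd _ _).mp ⟨Q.coeff n / |c|, ?_⟩
      rw [hs, Int.emod_def]; ring
    obtain ⟨a, ha⟩ := hdvd
    set Q₁ := Q - C a * P * X ^ j with hQ₁
    have hco : ∀ i, j ≤ i → Q₁.coeff i = Q.coeff i - a * P.coeff (i - j) := by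
      intro i hij
      rw [hQ₁, coeff_sub, coeff_mul_X_pow', if_pos hij, coeff_C_mul]
    have key : ∀ i, d + j ≤ i → 0 ≤ Q₁.coeff i ∧ Q₁.coeff i < |c| := by
      intro i hi
      rcases eq_or_lt_of_le hi with heq | hlt
      · rw [hco i (by omega)]
        have h1 : i - j = d := by omega
        have h2 : i = n := by omega
        rw [h1, h2, ← hc]
        have h3 : Q.coeff n - a * c = s := by linear_combination ha
        rw [h3]
        exact ⟨hs0, hs1⟩
      · have hz : P.coeff (i - j) = 0 :=
          coeff_eq_zero_of_natDegree_lt (by omega)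
        rw [hco i (by omega), hz, mul_zero, sub_zero]
        exact h i (by omega)
    obtain ⟨Q', hd', hgood⟩ := ih Q₁ key
    refine ⟨Q', ?_, hgood⟩
    have h1 : P ∣ Q - Q₁ := by
      rw [hQ₁]; ring_nf; exact ⟨C a * X ^ j, by ring⟩
    have := dvd_add h1 hd'
    simpa using this

/-- each `r ∈ ℤ[x]/Pℤ[x]` has a representation
`r = Σ_{i=0}^k r_i Xⁱ` with minimal `k` and `r_i ∈ {0, …, |p_d| - 1}` for
`d ≤ i ≤ k`; for this minimal `k` the integers `r_0, …, r_k` are unique. -/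
theorem stmt10 (d : ℕ) (hd : 1 ≤ d) (P : Polynomial ℤ)
    (hdeg : P.natDegree = d) (hprim : P.IsPrimitive)
    (hlead : P.coeff d ≠ 0) (h0 : P.coeff 0 ≠ 0) :
    ∀ r : Polynomial ℤ ⧸ Ideal.span {P},
      ∃ k : ℕ,
        (∃ f : ℕ → ℤ, IsRepr P d r k f) ∧
        (∀ k' < k, ¬ ∃ f : ℕ → ℤ, IsRepr P d r k' f) ∧
        (∀ f g : ℕ → ℤ, IsRepr P d r k f → IsRepr P d r k g →
          ∀ i ≤ k, f i = g i) := by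
  classical
  intro r
  obtain ⟨Q, rfl⟩ := Ideal.Quotient.mk_surjective r
  set mk := Ideal.Quotient.mk (Ideal.span {P}) with hmk
  have habs : 0 < |P.coeff d| := abs_pos.mpr hlead
  -- existence of some representation
  obtain ⟨Q', hdvd, hgood⟩ := reduce d P hdeg hlead (Q.natDegree + 1) Q
    (fun i hi => by
      rw [coeff_eq_zero_of_natDegree_lt (by omega)]
      exact ⟨le_refl 0, habs⟩)
  have hrepr : IsRepr P d (mk Q) Q'.natDegree Q'.coeff := by
    constructor
    · intro i hi _
      exact ⟨(hgood i hi).1, by have := (hgood i hi).2; omega⟩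
    · have hqq : mk Q = mk Q' := Ideal.Quotient.eq.mpr (Ideal.mem_span_singleton.mpr hdvd)
      rw [hqq]
      conv_lhs => rw [Q'.as_sum_range_C_mul_X_pow]
      exact mk_eq_sum P Q'.natDegree Q'.coeff
  have hex : ∃ k, ∃ f, IsRepr P d (mk Q) k f := ⟨_, _, hrepr⟩
  refine ⟨Nat.find hex, Nat.find_spec hex, fun k' hk' => Nat.find_min hex hk', ?_⟩
  -- uniqueness (holds for any k)
  set k := Nat.find hex
  intro f g hf hg i hik
  obtain ⟨hf1, hf2⟩ := hf
  obtain ⟨hg1, hg2⟩ := hg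
  set Qf : Polynomial ℤ := ∑ i ∈ Finset.range (k + 1), C (f i) * X ^ i with hQf
  set Qg : Polynomial ℤ := ∑ i ∈ Finset.range (k + 1), C (g i) * X ^ i with hQg
  have hmkeq : mk Qf = mk Qg := by
    rw [hQf, hQg, mk_eq_sum, mk_eq_sum, ← hf2, ← hg2]
  have hdv : P ∣ Qf - Qg := Ideal.mem_span_singleton.mp (Ideal.Quotient.eq.mp hmkeq)
  have hQeq : Qf = Qg := by
    by_contra hne
    obtain ⟨A, hA⟩ := hdv
    have hA0 : A ≠ 0 := by
      rintro rfl
      rw [mul_zero, sub_eq_zero] at hA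
      exact hne hA
    set n := d + A.natDegree with hn
    have hcoeff : (Qf - Qg).coeff n = P.coeff d * A.leadingCoeff := by
      rw [hA, hn, ← hdeg]
      rw [Polynomial.coeff_mul_degree_add_degree]
      rw [Polynomial.leadingCoeff, hdeg]
    have hne0 : P.coeff d * A.leadingCoeff ≠ 0 :=
      mul_ne_zero hlead (leadingCoeff_ne_zero.mpr hA0)
    have hcsub : (Qf - Qg).coeff n = if n ≤ k then f n - g n else 0 := by
      rw [coeff_sub, hQf, hQg, coeff_sum_repr, coeff_sum_repr]
      split <;> ring
    by_cases hnk : n ≤ k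
    · have hfn := hf1 n (by omega) hnk
      have hgn := hg1 n (by omega) hnk
      have h1 : |f n - g n| < |P.coeff d| := by
        rw [abs_sub_lt_iff]
        omega
      have h2 : |P.coeff d| ≤ |P.coeff d * A.leadingCoeff| := by
        rw [abs_mul]
        exact le_mul_of_one_le_right (abs_nonneg _)
          (Int.one_le_abs (leadingCoeff_ne_zero.mpr hA0))
      rw [hcsub, if_pos hnk] at hcoeff
      rw [hcoeff] at h1
      exact absurd (h1.trans_le h2) (lt_irrefl _)
    · rw [hcsub, if_neg hnk] at hcoeff
      exact hne0 hcoeff.symm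
  have := congrArg (fun p => Polynomial.coeff p i) hQeq
  simpa [hQf, hQg, coeff_sum_repr, Nat.lt_succ_iff, hik] using this
end
end

section
/- Every v ∈ ℤ^d[C] can be written uniquely in the form v = Σ_{i=0}^ℓ b_i C^i e₁, where e₁ = (1, 0, …, 0)ᵀ ∈ ℚ^d, ℓ ∈ ℕ is minimal, b_0, …, b_ℓ ∈ ℤ, and b_i ∈ {0, 1, …, |p_d| − 1} for every i with d ≤ i ≤ ℓ. -/
open Matrix Polynomial

noncomputable section

/-- The companion matrix of a monic polynomial of degree `n`. -/
def companionMat (n : ℕ) (q : Polynomial ℚ) : Matrix (Fin n) (Fin n) ℚ :=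
  Matrix.of fun i j =>
    (if (i : ℕ) = (j : ℕ) + 1 then 1 else 0) +
    (if (j : ℕ) = n - 1 then -(q.coeff i) else 0)

/-- `v = Σ_{i=0}^ℓ f i • Cⁱ e₁` with `f i ∈ {0, …, |p_d| - 1}` for `d ≤ i ≤ ℓ`. -/
def IsVecRepr (d : ℕ) (Cm : Matrix (Fin d) (Fin d) ℚ) (pd : ℤ)
    (v : Fin d → ℚ) (ℓ : ℕ) (f : ℕ → ℤ) : Prop :=
  (∀ i, d ≤ i → i ≤ ℓ → 0 ≤ f i ∧ f i ≤ |pd| - 1) ∧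
  v = ∑ i ∈ Finset.range (ℓ + 1),
    (f i : ℚ) • (Cm ^ i).mulVec (fun j : Fin d => if (j : ℕ) = 0 then 1 else 0)

namespace Stmt11Aux

/-- the first standard basis vector -/
def e1 (d : ℕ) : Fin d → ℚ := fun j => if (j : ℕ) = 0 then 1 else 0

/-- the `i`-th standard basis vector (as a function of a natural index) -/
def bv (d i : ℕ) : Fin d → ℚ := fun j => if (j : ℕ) = i then 1 else 0

lemma bv_eq_single (d : ℕ) {i : ℕ} (hi : i < d) :
    bv d i = Pi.single (⟨i, hi⟩ : Fin d) (1 : ℚ) := by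
  funext j
  simp [bv, Pi.single_apply, Fin.ext_iff, eq_comm]

lemma pow_mulVec_e1 {d : ℕ} (q : Polynomial ℚ) {i : ℕ} (hi : i < d) :
    ((companionMat d q) ^ i).mulVec (e1 d) = bv d i := by
  induction i with
  | zero =>
    simp only [pow_zero, Matrix.one_mulVec]
    funext j; simp [e1, bv]
  | succ n ih =>
    have hn : n < d := Nat.lt_of_succ_lt hi
    rw [pow_succ', ← Matrix.mulVec_mulVec, ih hn, bv_eq_single d hn,
      Matrix.mulVec_single]
    funext j
    have hnd : n ≠ d - 1 := by omega
    simp [companionMat, bv, hnd]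

lemma pow_d_mulVec_e1 {d : ℕ} (hd : 1 ≤ d) (q : Polynomial ℚ) :
    ((companionMat d q) ^ d).mulVec (e1 d) = fun i : Fin d => -(q.coeff i) := by
  have hpow : (companionMat d q) ^ d
      = companionMat d q * (companionMat d q) ^ (d - 1) := by
    rw [← pow_succ', Nat.sub_add_cancel hd]
  rw [hpow, ← Matrix.mulVec_mulVec, pow_mulVec_e1 q (by omega : d - 1 < d),
    bv_eq_single d (by omega : d - 1 < d), Matrix.mulVec_single]
  funext j
  have h1 : (j : ℕ) ≠ (d - 1) + 1 := by omega
  simp [companionMat, h1]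

/-- the fundamental relation `q(C) e₁ = 0` written out. -/
lemma qsum {d : ℕ} (hd : 1 ≤ d) (q : Polynomial ℚ) (hq1 : q.coeff d = 1) :
    ∑ i ∈ Finset.range (d + 1),
      (q.coeff i) • ((companionMat d q) ^ i).mulVec (e1 d) = 0 := by
  rw [Finset.sum_range_succ, hq1, one_smul, pow_d_mulVec_e1 hd q]
  funext j
  rw [Pi.add_apply, Finset.sum_apply]
  have hji : (j : ℕ) < d := j.isLt
  have : ∀ i ∈ Finset.range d,
      ((q.coeff i) • ((companionMat d q) ^ i).mulVec (e1 d)) j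
        = if (j : ℕ) = i then q.coeff i else 0 := by
    intro i hi
    rw [pow_mulVec_e1 q (Finset.mem_range.mp hi)]
    simp [bv, mul_ite]
  rw [Finset.sum_congr rfl this, Finset.sum_ite_eq (Finset.range d) (j : ℕ)]
  simp [hji]

section Main

variable {d : ℕ} (Cm : Matrix (Fin d) (Fin d) ℚ)

/-- value of a digit string -/
def val (f : ℕ → ℤ) (ℓ : ℕ) : Fin d → ℚ :=
  ∑ i ∈ Finset.range (ℓ + 1), (f i : ℚ) • (Cm ^ i).mulVec (e1 d)

lemma mulVec_sum_smul {ι : Type*} (A : Matrix (Fin d) (Fin d) ℚ) (s : Finset ι)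
    (c : ι → ℚ) (v : ι → Fin d → ℚ) :
    A.mulVec (∑ i ∈ s, c i • v i) = ∑ i ∈ s, c i • A.mulVec (v i) := by
  funext j
  simp only [Matrix.mulVec, dotProduct, Finset.sum_apply, Pi.smul_apply,
    smul_eq_mul, Finset.mul_sum]
  rw [Finset.sum_comm]
  apply Finset.sum_congr rfl
  intro i _
  apply Finset.sum_congr rfl
  intro k _
  ring

lemma sum_mulVec' {ι : Type*} (s : Finset ι) (M : ι → Matrix (Fin d) (Fin d) ℚ)
    (v : Fin d → ℚ) :
    (∑ i ∈ s, M i).mulVec v = ∑ i ∈ s, (M i).mulVec v := by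
  induction s using Finset.cons_induction with
  | empty => simp [Matrix.zero_mulVec]
  | cons a s ha ih => rw [Finset.sum_cons, Finset.sum_cons, Matrix.add_mulVec, ih]

/-- the shifted fundamental relation. -/
lemma Psum_shift (P : Polynomial ℤ)
    (hLP : ∑ i ∈ Finset.range (d + 1),
      ((P.coeff i : ℚ)) • (Cm ^ i).mulVec (e1 d) = 0) (u : ℕ) :
    ∑ i ∈ Finset.range (d + 1),
      ((P.coeff i : ℚ)) • (Cm ^ (i + u)).mulVec (e1 d) = 0 := by
  have : ∀ i, (Cm ^ (i + u)).mulVec (e1 d)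
      = (Cm ^ u).mulVec ((Cm ^ i).mulVec (e1 d)) := by
    intro i
    rw [Matrix.mulVec_mulVec, ← pow_add, Nat.add_comm u i]
  simp only [this]
  rw [← mulVec_sum_smul, hLP, Matrix.mulVec_zero]

lemma val_pad (f : ℕ → ℤ) {ℓ L : ℕ} (h : ℓ ≤ L) :
    val Cm (fun i => if i ≤ ℓ then f i else 0) L = val Cm f ℓ := by
  unfold val
  rw [← Finset.sum_subset (Finset.range_subset_range.mpr (by omega : ℓ + 1 ≤ L + 1))]
  · apply Finset.sum_congr rfl
    intro i hi
    have : i ≤ ℓ := by have := Finset.mem_range.mp hi; omega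
    simp [this]
  · intro i _ hni
    have : ¬ i ≤ ℓ := by
      intro hle; exact hni (Finset.mem_range.mpr (by omega))
    simp [this]

lemma val_add (f g : ℕ → ℤ) (L : ℕ) :
    val Cm f L + val Cm g L = val Cm (fun i => f i + g i) L := by
  unfold val
  rw [← Finset.sum_add_distrib]
  apply Finset.sum_congr rfl
  intro i _
  push_cast
  rw [add_smul]

lemma intcast_eq_val (hd : 1 ≤ d) (q : Polynomial ℚ) (w : Fin d → ℤ) :
    (fun j => ((w j : ℚ))) =
      val (companionMat d q) (fun i => if h : i < d then w ⟨i, h⟩ else 0) (d - 1) := by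
  unfold val
  have hrange : d - 1 + 1 = d := by omega
  rw [hrange]
  funext j
  rw [Finset.sum_apply]
  have : ∀ i ∈ Finset.range d,
      (((if h : i < d then w ⟨i, h⟩ else 0 : ℤ) : ℚ) •
        ((companionMat d q) ^ i).mulVec (e1 d)) j
      = if (j : ℕ) = i then ((w j : ℚ)) else 0 := by
    intro i hi
    have hi' : i < d := Finset.mem_range.mp hi
    rw [pow_mulVec_e1 q hi']
    simp only [bv, Pi.smul_apply, smul_eq_mul, hi', dif_pos, mul_ite, mul_one, mul_zero]
    by_cases hji : (j : ℕ) = i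
    · have : j = (⟨i, hi'⟩ : Fin d) := by exact Fin.ext hji
      simp [hji, this]
    · simp [hji]
  rw [Finset.sum_congr rfl this, Finset.sum_ite_eq (Finset.range d) (j : ℕ)]
  simp [j.isLt]

lemma mulVec_val (f : ℕ → ℤ) (ℓ : ℕ) :
    Cm.mulVec (val Cm f ℓ) =
      val Cm (fun i => if i = 0 then 0 else f (i - 1)) (ℓ + 1) := by
  unfold val
  rw [mulVec_sum_smul]
  rw [Finset.sum_range_succ' (fun i => ((if i = 0 then 0 else f (i - 1) : ℤ) : ℚ) •
      (Cm ^ i).mulVec (e1 d)) (ℓ + 1)]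
  simp only [Nat.succ_ne_zero, if_false, Nat.add_sub_cancel, reduceIte,
    Int.cast_zero, zero_smul, add_zero]
  apply Finset.sum_congr rfl
  intro i _
  rw [Matrix.mulVec_mulVec, ← pow_succ']

lemma pow_mulVec_intcast_repr (hd : 1 ≤ d) (q : Polynomial ℚ) (j : ℕ) (w : Fin d → ℤ) :
    ∃ (ℓ : ℕ) (f : ℕ → ℤ),
      ((companionMat d q) ^ j).mulVec (fun i => ((w i : ℚ))) = val (companionMat d q) f ℓ := by
  induction j with
  | zero =>
    refine ⟨d - 1, fun i => if h : i < d then w ⟨i, h⟩ else 0, ?_⟩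
    rw [pow_zero, Matrix.one_mulVec]
    exact intcast_eq_val hd q w
  | succ n ih =>
    obtain ⟨ℓ, f, hf⟩ := ih
    refine ⟨ℓ + 1, fun i => if i = 0 then 0 else f (i - 1), ?_⟩
    rw [pow_succ', ← Matrix.mulVec_mulVec, hf]
    exact mulVec_val _ f ℓ

lemma intSpan_repr (hd : 1 ≤ d) (q : Polynomial ℚ) (v : Fin d → ℚ)
    (hv : v ∈ intSpan (companionMat d q)) :
    ∃ (ℓ : ℕ) (f : ℕ → ℤ), v = val (companionMat d q) f ℓ := by
  obtain ⟨k, w, hw⟩ := hv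
  subst hw
  induction k with
  | zero =>
    obtain ⟨ℓ, f, hf⟩ := pow_mulVec_intcast_repr hd q 0 (w 0)
    exact ⟨ℓ, f, by simpa using hf⟩
  | succ n ih =>
    obtain ⟨ℓ₁, f₁, hf₁⟩ := ih
    obtain ⟨ℓ₂, f₂, hf₂⟩ := pow_mulVec_intcast_repr hd q (n + 1) (w (n + 1))
    rw [Finset.sum_range_succ, hf₁, hf₂]
    refine ⟨max ℓ₁ ℓ₂, fun i => (if i ≤ ℓ₁ then f₁ i else 0) +
      (if i ≤ ℓ₂ then f₂ i else 0), ?_⟩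
    have h := val_add (companionMat d q) (fun i => if i ≤ ℓ₁ then f₁ i else 0)
      (fun i => if i ≤ ℓ₂ then f₂ i else 0) (max ℓ₁ ℓ₂)
    rw [val_pad (companionMat d q) f₁ (le_max_left ℓ₁ ℓ₂),
      val_pad (companionMat d q) f₂ (le_max_right ℓ₁ ℓ₂)] at h
    exact h

/-- one carry step at position `t`. -/
lemma carry_step (hd : 1 ≤ d) (P : Polynomial ℤ) (hdegP : P.natDegree = d)
    (hpd : P.coeff d ≠ 0)
    (hLP : ∑ i ∈ Finset.range (d + 1),
      ((P.coeff i : ℚ)) • (Cm ^ i).mulVec (e1 d) = 0)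
    {t ℓ : ℕ} (hdt : d ≤ t) (htl : t ≤ ℓ) (f : ℕ → ℤ) :
    ∃ f' : ℕ → ℤ, val Cm f' ℓ = val Cm f ℓ ∧ (∀ i, t < i → f' i = f i) ∧
      (0 ≤ f' t ∧ f' t ≤ |P.coeff d| - 1) := by
  set pd := P.coeff d with hpddef
  set a : ℤ := |pd| with hadef
  have ha : 0 < a := abs_pos.mpr hpd
  set ε : ℤ := if 0 ≤ pd then 1 else -1 with hedef
  have hea : ε * pd = a := by
    by_cases h : 0 ≤ pd
    · simp [hedef, hadef, h, abs_of_nonneg h]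
    · simp [hedef, hadef, h, abs_of_neg (lt_of_not_ge h)]
  set r : ℤ := f t / a with hrdef
  set u : ℕ := t - d with hudef
  have hut : u + d = t := by omega
  set δ : ℕ → ℤ := fun i => if u ≤ i ∧ i ≤ t then r * ε * P.coeff (i - u) else 0 with hddef
  refine ⟨fun i => f i - δ i, ?_, ?_, ?_⟩
  · -- value unchanged
    have hδval : val Cm δ ℓ = 0 := by
      unfold val
      rw [← Finset.sum_subset (show Finset.Icc u t ⊆ Finset.range (ℓ + 1) by
        intro x hx
        simp only [Finset.mem_Icc] at hx
        exact Finset.mem_range.mpr (by omega))]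
      · have hIcc : Finset.Icc u t = Finset.Ico u (t + 1) := by
          rw [Finset.Ico_add_one_right_eq_Icc]
        rw [hIcc, Finset.sum_Ico_eq_sum_range]
        have hlen : t + 1 - u = d + 1 := by omega
        rw [hlen]
        have : ∀ i ∈ Finset.range (d + 1),
            ((δ (u + i) : ℚ)) • (Cm ^ (u + i)).mulVec (e1 d)
            = ((r * ε : ℤ) : ℚ) • (((P.coeff i : ℚ)) • (Cm ^ (i + u)).mulVec (e1 d)) := by
          intro i hi
          have hi' : i ≤ d := by have := Finset.mem_range.mp hi; omega
          have hcond : u ≤ u + i ∧ u + i ≤ t := by omega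
          have hsimp : u + i - u = i := by omega
          have hδ : δ (u + i) = r * ε * P.coeff i := by
            simp only [hddef]
            rw [if_pos hcond, hsimp]
          rw [hδ, Nat.add_comm u i]
          push_cast
          rw [← smul_smul]
        rw [Finset.sum_congr rfl this, ← Finset.smul_sum, Psum_shift Cm P hLP u, smul_zero]
      · intro x _ hx
        have : ¬ (u ≤ x ∧ x ≤ t) := by
          intro h
          exact hx (Finset.mem_Icc.mpr h)
        simp [hddef, this]
    have : val Cm (fun i => f i - δ i) ℓ + val Cm δ ℓ = val Cm f ℓ := by
      rw [val_add]
      simp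
    rw [hδval, add_zero] at this
    exact this
  · intro i hi
    have : ¬ (u ≤ i ∧ i ≤ t) := by omega
    simp [hddef, this]
  · have hδt : δ t = r * a := by
      have hcond : u ≤ t ∧ t ≤ t := ⟨by omega, le_refl t⟩
      have htu : t - u = d := by omega
      rw [hddef]
      simp only [hcond, and_self, if_true, htu]
      rw [mul_assoc, hea]
    have hmod : f t - δ t = f t % a := by
      rw [hδt, hrdef]
      have h := Int.mul_ediv_add_emod (f t) a
      linarith
    constructor
    · show (0 : ℤ) ≤ f t - δ t
      rw [hmod]; exact Int.emod_nonneg (f t) (ne_of_gt ha)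
    · show f t - δ t ≤ |P.coeff d| - 1
      rw [hmod]
      have h3 : f t % a < a := Int.emod_lt_of_pos (f t) ha
      have h4 : a = |P.coeff d| := by rw [hadef, hpddef]
      omega

/-- full carry normalization. -/
lemma carry_all (hd : 1 ≤ d) (P : Polynomial ℤ) (hdegP : P.natDegree = d)
    (hpd : P.coeff d ≠ 0)
    (hLP : ∑ i ∈ Finset.range (d + 1),
      ((P.coeff i : ℚ)) • (Cm ^ i).mulVec (e1 d) = 0)
    (ℓ : ℕ) :
    ∀ (m : ℕ) (f : ℕ → ℤ),
      (∀ i, d ≤ i → i ≤ ℓ → m ≤ i → 0 ≤ f i ∧ f i ≤ |P.coeff d| - 1) →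
      ∃ g : ℕ → ℤ, val Cm g ℓ = val Cm f ℓ ∧
        ∀ i, d ≤ i → i ≤ ℓ → 0 ≤ g i ∧ g i ≤ |P.coeff d| - 1 := by
  intro m
  induction m with
  | zero =>
    intro f hf
    exact ⟨f, rfl, fun i h1 h2 => hf i h1 h2 (Nat.zero_le i)⟩
  | succ m ih =>
    intro f hf
    by_cases hm : d ≤ m ∧ m ≤ ℓ
    · obtain ⟨f', hval, habove, hok⟩ := carry_step Cm hd P hdegP hpd hLP hm.1 hm.2 f
      obtain ⟨g, hgval, hgok⟩ := ih f' (by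
        intro i h1 h2 h3
        rcases Nat.lt_or_ge m i with hlt | hge
        · rw [habove i hlt]
          exact hf i h1 h2 (by omega)
        · have : i = m := by omega
          rw [this]
          exact hok)
      exact ⟨g, by rw [hgval, hval], hgok⟩
    · apply ih f
      intro i h1 h2 h3
      rcases Nat.lt_or_ge m i with hlt | hge
      · exact hf i h1 h2 (by omega)
      · have : i = m := by omega
        omega

end Main

section Uniq

variable {d : ℕ} (Cm : Matrix (Fin d) (Fin d) ℚ)

/-- evaluation of an integer polynomial at the companion matrix, applied to `e₁`. -/
def phi (h : Polynomial ℤ) : Fin d → ℚ :=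
  (Polynomial.aeval Cm (h.map (Int.castRingHom ℚ))).mulVec (e1 d)

lemma phi_eq_sum (h : Polynomial ℤ) {L : ℕ} (hL : h.natDegree ≤ L) :
    phi Cm h = ∑ i ∈ Finset.range (L + 1),
      ((h.coeff i : ℚ)) • (Cm ^ i).mulVec (e1 d) := by
  unfold phi
  have hmapdeg : (h.map (Int.castRingHom ℚ)).natDegree < L + 1 :=
    lt_of_le_of_lt (le_trans (Polynomial.natDegree_map_le) hL) (Nat.lt_succ_self L)
  rw [Polynomial.aeval_eq_sum_range' hmapdeg]
  rw [sum_mulVec']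
  apply Finset.sum_congr rfl
  intro i _
  rw [Polynomial.coeff_map, Matrix.smul_mulVec]
  simp

lemma phi_add (h₁ h₂ : Polynomial ℤ) : phi Cm (h₁ + h₂) = phi Cm h₁ + phi Cm h₂ := by
  unfold phi
  rw [Polynomial.map_add, map_add, Matrix.add_mulVec]

lemma phi_sub (h₁ h₂ : Polynomial ℤ) : phi Cm (h₁ - h₂) = phi Cm h₁ - phi Cm h₂ := by
  unfold phi
  rw [Polynomial.map_sub, map_sub, Matrix.sub_mulVec]

lemma phi_C_mul (a : ℤ) (h : Polynomial ℤ) :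
    phi Cm (Polynomial.C a * h) = (a : ℚ) • phi Cm h := by
  unfold phi
  rw [Polynomial.map_mul, Polynomial.map_C, _root_.map_mul, Polynomial.aeval_C]
  simp only [Int.coe_castRingHom]
  rw [Algebra.algebraMap_eq_smul_one, smul_mul_assoc, one_mul, Matrix.smul_mulVec]

lemma phi_X_pow_mul (u : ℕ) (h : Polynomial ℤ) :
    phi Cm (Polynomial.X ^ u * h) = (Cm ^ u).mulVec (phi Cm h) := by
  unfold phi
  rw [Polynomial.map_mul, Polynomial.map_pow, Polynomial.map_X, _root_.map_mul,
    _root_.map_pow, Polynomial.aeval_X, Matrix.mulVec_mulVec]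

lemma phi_lowdeg (hd : 1 ≤ d) (q : Polynomial ℚ) (h : Polynomial ℤ)
    (hdeg : h.natDegree < d) (hphi : phi (companionMat d q) h = 0) : h = 0 := by
  have hL : h.natDegree ≤ d - 1 := by omega
  have hsum := phi_eq_sum (companionMat d q) h hL
  rw [hphi] at hsum
  have hrange : d - 1 + 1 = d := by omega
  rw [hrange] at hsum
  have hcoeff : ∀ j : Fin d, (h.coeff (j : ℕ) : ℚ) = 0 := by
    intro j
    have := congrFun hsum.symm j
    rw [Finset.sum_apply] at this
    have heach : ∀ i ∈ Finset.range d,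
        (((h.coeff i : ℚ)) • ((companionMat d q) ^ i).mulVec (e1 d)) j
        = if (j : ℕ) = i then (h.coeff i : ℚ) else 0 := by
      intro i hi
      rw [pow_mulVec_e1 q (Finset.mem_range.mp hi)]
      simp [bv, mul_ite]
    rw [Finset.sum_congr rfl heach, Finset.sum_ite_eq (Finset.range d) (j : ℕ)] at this
    simpa [j.isLt] using this
  ext n
  simp only [Polynomial.coeff_zero]
  rcases Nat.lt_or_ge n d with hn | hn
  · have := hcoeff ⟨n, hn⟩
    exact_mod_cast this
  · exact Polynomial.coeff_eq_zero_of_natDegree_lt (by omega)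

lemma key_dvd_pow (hd : 1 ≤ d) (q : Polynomial ℚ) (P : Polynomial ℤ)
    (hdegP : P.natDegree = d) (hpd : P.coeff d ≠ 0)
    (hphiP : phi (companionMat d q) P = 0) :
    ∀ (n : ℕ) (h : Polynomial ℤ), h.natDegree ≤ n →
      phi (companionMat d q) h = 0 →
      ∃ (k : ℕ) (s : Polynomial ℤ), Polynomial.C (P.coeff d) ^ k * h = P * s := by
  intro n
  induction n with
  | zero =>
    intro h hdeg hphi
    have : h = 0 := phi_lowdeg hd q h (by omega) hphi
    exact ⟨0, 0, by simp [this]⟩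
  | succ n ih =>
    intro h hdeg hphi
    rcases Nat.lt_or_ge h.natDegree (n + 1) with hlt | hge
    · exact ih h (by omega) hphi
    have hN : h.natDegree = n + 1 := le_antisymm hdeg hge
    rcases Nat.lt_or_ge h.natDegree d with hNd | hNd
    · have : h = 0 := phi_lowdeg hd q h hNd hphi
      exact ⟨0, 0, by simp [this]⟩
    set N := h.natDegree with hNdef
    set u := N - d with hudef
    have hud : u + d = N := by omega
    set h' := Polynomial.C (P.coeff d) * h -
      Polynomial.C h.leadingCoeff * (Polynomial.X ^ u * P) with h'def
    have hcoeffXP : ∀ m : ℕ, (Polynomial.X ^ u * P).coeff m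
        = if u ≤ m then P.coeff (m - u) else 0 := by
      intro m
      rw [mul_comm, Polynomial.coeff_mul_X_pow']
    have h'deg : h'.natDegree ≤ n := by
      rw [Polynomial.natDegree_le_iff_coeff_eq_zero]
      intro m hm
      have hmN : N ≤ m := by omega
      rw [h'def]
      simp only [Polynomial.coeff_sub, Polynomial.coeff_C_mul, hcoeffXP m,
        if_pos (by omega : u ≤ m)]
      rcases eq_or_lt_of_le hmN with heq | hlt'
      · have hmu : m - u = d := by omega
        rw [hmu, ← heq]
        rw [Polynomial.leadingCoeff, ← hNdef]
        ring
      · have h1 : h.coeff m = 0 := Polynomial.coeff_eq_zero_of_natDegree_lt (by omega)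
        have h2 : P.coeff (m - u) = 0 :=
          Polynomial.coeff_eq_zero_of_natDegree_lt (by omega)
        rw [h1, h2]
        ring
    have h'phi : phi (companionMat d q) h' = 0 := by
      rw [h'def, phi_sub, phi_C_mul, phi_C_mul, phi_X_pow_mul, hphi, hphiP,
        smul_zero, Matrix.mulVec_zero, smul_zero, sub_zero]
    obtain ⟨k, s, hks⟩ := ih h' h'deg h'phi
    refine ⟨k + 1, s + Polynomial.C (P.coeff d) ^ k * Polynomial.C h.leadingCoeff *
      Polynomial.X ^ u, ?_⟩
    rw [h'def] at hks
    linear_combination hks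

lemma P_dvd (hd : 1 ≤ d) (q : Polynomial ℚ) (P : Polynomial ℤ)
    (hdegP : P.natDegree = d) (hpd : P.coeff d ≠ 0) (hprim : P.IsPrimitive)
    (hphiP : phi (companionMat d q) P = 0)
    (h : Polynomial ℤ) (hphi : phi (companionMat d q) h = 0) : P ∣ h := by
  obtain ⟨k, s, hks⟩ := key_dvd_pow hd q P hdegP hpd hphiP h.natDegree h (le_refl _) hphi
  have hCdvd : Polynomial.C ((P.coeff d) ^ k) ∣ P * s := by
    rw [← hks, map_pow]
    exact Dvd.intro _ rfl
  have hcont : (P.coeff d) ^ k ∣ (P * s).content :=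
    Polynomial.dvd_content_iff_C_dvd.mpr hCdvd
  rw [Polynomial.content_mul, hprim.content_eq_one, one_mul] at hcont
  have hCs : Polynomial.C ((P.coeff d) ^ k) ∣ s :=
    Polynomial.dvd_content_iff_C_dvd.mp hcont
  obtain ⟨s', hs'⟩ := hCs
  rw [hs'] at hks
  have hCne : Polynomial.C ((P.coeff d) ^ k) ≠ 0 := by
    simp only [ne_eq, Polynomial.C_eq_zero]
    exact pow_ne_zero k hpd
  have : Polynomial.C ((P.coeff d) ^ k) * h = Polynomial.C ((P.coeff d) ^ k) * (P * s') := by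
    rw [map_pow] at hks ⊢
    rw [hks]
    ring
  exact ⟨s', mul_left_cancel₀ hCne this⟩

end Uniq

end Stmt11Aux

open Stmt11Aux in
/-- every `v ∈ ℤᵈ[C]` can be written uniquely as
`v = Σ_{i=0}^ℓ b_i Cⁱ e₁` with `ℓ` minimal and `b_i ∈ {0, …, |p_d| - 1}`
for `d ≤ i ≤ ℓ`. -/
theorem stmt11 (d : ℕ) (hd : 1 ≤ d) (P : Polynomial ℤ)
    (hdeg : P.natDegree = d) (hprim : P.IsPrimitive)
    (hlead : P.coeff d ≠ 0) (h0 : P.coeff 0 ≠ 0)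
    (c : ℤ) (q : Polynomial ℚ) (hq : q.Monic)
    (hPq : P.map (Int.castRingHom ℚ) = Polynomial.C (c : ℚ) * q)
    (Cm : Matrix (Fin d) (Fin d) ℚ) (hCm : Cm = companionMat d q) :
    ∀ v ∈ intSpan Cm,
      ∃ ℓ : ℕ,
        (∃ f : ℕ → ℤ, IsVecRepr d Cm (P.coeff d) v ℓ f) ∧
        (∀ ℓ' < ℓ, ¬ ∃ f : ℕ → ℤ, IsVecRepr d Cm (P.coeff d) v ℓ' f) ∧
        (∀ f g : ℕ → ℤ, IsVecRepr d Cm (P.coeff d) v ℓ f →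
          IsVecRepr d Cm (P.coeff d) v ℓ g → ∀ i ≤ ℓ, f i = g i) := by
  subst hCm
  -- basic facts about `c` and `q`
  have hc0 : (c : ℚ) ≠ 0 := by
    intro hc
    rw [hc, Polynomial.C_0, zero_mul] at hPq
    have h2 : (P.map (Int.castRingHom ℚ)).coeff d = 0 := by rw [hPq]; simp
    rw [Polynomial.coeff_map] at h2
    simp only [eq_intCast, Int.cast_eq_zero] at h2
    exact hlead h2
  have hmapdeg : (P.map (Int.castRingHom ℚ)).natDegree = d := by
    apply le_antisymm
    · rw [← hdeg]; exact Polynomial.natDegree_map_le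
    · apply Polynomial.le_natDegree_of_ne_zero
      rw [Polynomial.coeff_map]
      simpa using hlead
  have hqd : q.natDegree = d := by
    rw [hPq, Polynomial.natDegree_C_mul hc0] at hmapdeg
    exact hmapdeg
  have hq1 : q.coeff d = 1 := by
    rw [← hqd]
    exact hq.coeff_natDegree
  have hcoeffPq : ∀ i : ℕ, ((P.coeff i : ℚ)) = c * q.coeff i := by
    intro i
    have h2 : (P.map (Int.castRingHom ℚ)).coeff i = (Polynomial.C (c : ℚ) * q).coeff i := by
      rw [hPq]
    rw [Polynomial.coeff_map, Polynomial.coeff_C_mul] at h2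
    simpa using h2
  -- the fundamental relation
  have hLP : ∑ i ∈ Finset.range (d + 1),
      ((P.coeff i : ℚ)) • ((companionMat d q) ^ i).mulVec (e1 d) = 0 := by
    have := qsum hd q hq1
    calc ∑ i ∈ Finset.range (d + 1),
        ((P.coeff i : ℚ)) • ((companionMat d q) ^ i).mulVec (e1 d)
        = (c : ℚ) • ∑ i ∈ Finset.range (d + 1),
          (q.coeff i) • ((companionMat d q) ^ i).mulVec (e1 d) := by
          rw [Finset.smul_sum]
          apply Finset.sum_congr rfl
          intro i _
          rw [hcoeffPq i, mul_smul]
      _ = 0 := by rw [this, smul_zero]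
  have hphiP : phi (companionMat d q) P = 0 := by
    rw [phi_eq_sum (companionMat d q) P (le_of_eq hdeg)]
    exact hLP
  -- e1 is the vector in IsVecRepr
  have he1 : (fun j : Fin d => if (j : ℕ) = 0 then (1 : ℚ) else 0) = e1 d := rfl
  intro v hv
  -- existence
  obtain ⟨ℓ₀, f₀, hf₀⟩ := intSpan_repr hd q v hv
  obtain ⟨g₀, hg₀val, hg₀ok⟩ := carry_all (companionMat d q) hd P hdeg hlead hLP ℓ₀
    (ℓ₀ + 1) f₀ (fun i _ h2 h3 => absurd (by omega : i ≤ ℓ₀) (by omega))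
  have hex : ∃ ℓ : ℕ, ∃ f : ℕ → ℤ, IsVecRepr d (companionMat d q) (P.coeff d) v ℓ f := by
    refine ⟨ℓ₀, g₀, hg₀ok, ?_⟩
    show v = val (companionMat d q) g₀ ℓ₀
    rw [hg₀val]
    exact hf₀
  classical
  refine ⟨Nat.find hex, Nat.find_spec hex, fun ℓ' hlt => Nat.find_min hex hlt, ?_⟩
  -- uniqueness
  set ℓ := Nat.find hex with hldef
  intro f g hf hg i hil
  obtain ⟨hfd, hfv⟩ := hf
  obtain ⟨hgd, hgv⟩ := hg
  rw [he1] at hfv hgv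
  -- the difference polynomial
  set h : Polynomial ℤ :=
    ∑ i ∈ Finset.range (ℓ + 1), Polynomial.C (f i - g i) * Polynomial.X ^ i with hhdef
  have hcoeff : ∀ n : ℕ, h.coeff n = if n ≤ ℓ then f n - g n else 0 := by
    intro n
    rw [hhdef, Polynomial.finset_sum_coeff]
    have : ∀ j ∈ Finset.range (ℓ + 1),
        (Polynomial.C (f j - g j) * Polynomial.X ^ j).coeff n
        = if n = j then f j - g j else 0 := by
      intro j _
      rw [Polynomial.coeff_C_mul, Polynomial.coeff_X_pow]
      simp [mul_ite]
    rw [Finset.sum_congr rfl this, Finset.sum_ite_eq (Finset.range (ℓ + 1)) n]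
    simp [Finset.mem_range, Nat.lt_succ_iff]
  have hhdeg : h.natDegree ≤ ℓ := by
    rw [Polynomial.natDegree_le_iff_coeff_eq_zero]
    intro m hm
    rw [hcoeff m, if_neg (by omega)]
  have hphih : phi (companionMat d q) h = 0 := by
    rw [phi_eq_sum (companionMat d q) h hhdeg]
    have : ∀ j ∈ Finset.range (ℓ + 1),
        ((h.coeff j : ℚ)) • ((companionMat d q) ^ j).mulVec (e1 d)
        = ((f j : ℚ)) • ((companionMat d q) ^ j).mulVec (e1 d)
          - ((g j : ℚ)) • ((companionMat d q) ^ j).mulVec (e1 d) := by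
      intro j hj
      have hjl : j ≤ ℓ := by have := Finset.mem_range.mp hj; omega
      rw [hcoeff j, if_pos hjl]
      push_cast
      rw [sub_smul]
    rw [Finset.sum_congr rfl this, Finset.sum_sub_distrib, ← hfv, ← hgv, sub_self]
  have hPdvd : P ∣ h := P_dvd hd q P hdeg hlead hprim hphiP h hphih
  obtain ⟨s, hs⟩ := hPdvd
  by_cases hs0 : s = 0
  · -- h = 0, coefficients agree
    rw [hs0, mul_zero] at hs
    have := hcoeff i
    rw [hs, if_pos hil, Polynomial.coeff_zero] at this
    omega
  · exfalso
    have hP0 : P ≠ 0 := fun hP => hlead (by rw [hP]; simp)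
    have hh0 : h ≠ 0 := by
      rw [hs]
      exact mul_ne_zero hP0 hs0
    have hhN : h.natDegree = d + s.natDegree := by
      rw [hs, Polynomial.natDegree_mul hP0 hs0, hdeg]
    set N := h.natDegree with hNdef
    have hNd : d ≤ N := by omega
    have hNl : N ≤ ℓ := hhdeg
    have hlc : h.coeff N = P.coeff d * s.leadingCoeff := by
      rw [hNdef, ← Polynomial.leadingCoeff, hs, Polynomial.leadingCoeff_mul,
        Polynomial.leadingCoeff, hdeg]
    have hcN : h.coeff N = f N - g N := by
      rw [hcoeff N, if_pos hNl]
    have hslc : s.leadingCoeff ≠ 0 := Polynomial.leadingCoeff_ne_zero.mpr hs0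
    have h1 : |P.coeff d| ≤ |h.coeff N| := by
      rw [hlc, abs_mul]
      have : 1 ≤ |s.leadingCoeff| := Int.one_le_abs hslc
      nlinarith [abs_nonneg (P.coeff d)]
    have hfN := hfd N hNd hNl
    have hgN := hgd N hNd hNl
    have h2 : |h.coeff N| ≤ |P.coeff d| - 1 := by
      rw [hcN]
      rw [abs_le]
      omega
    omega
end
end

section
/- There is a ℤ-module isomorphism h : ℤ^d[C] → ℤ[x]/Pℤ[x] satisfying h(C^i e₁) = X^i for every i ∈ ℕ, where e₁ = (1, 0, …, 0)ᵀ ∈ ℚ^d and X = x + Pℤ[x]; in particular, ℤ^d[C] ≅ ℤ[x]/Pℤ[x] as ℤ-modules. -/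
open Matrix Polynomial

noncomputable section

/-- `ℤᵈ[C]` as a `ℤ`-submodule of `ℚᵈ`: the span of all `Cⁱ v` with
`v` an integer vector; the smallest `C`-invariant `ℤ`-module containing `ℤᵈ`. -/
def intSpanSub {n : ℕ} (A : Matrix (Fin n) (Fin n) ℚ) : Submodule ℤ (Fin n → ℚ) :=
  Submodule.span ℤ
    {x | ∃ (i : ℕ) (v : Fin n → ℤ), x = (A ^ i).mulVec (fun j => ((v j : ℚ)))}

/-!
Consider `φ : ℤ[x] → ℚᵈ`, `f ↦ f(C) e₁`. On coefficient vectors of polynomials of degree `< d`,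
`C` acts as multiplication by `x` followed by one reduction step modulo `q`; hence `f(C) e₁` is the
coefficient vector of `f mod q`. So `ker φ = ℤ[x] ∩ q ℚ[x]`, which is `P ℤ[x]` by Gauss's lemma,
while the image of `φ` contains `ℤᵈ` (coefficient vectors of integer polynomials of degree `< d`)
and is `C`-stable (`C φ(f) = φ(x f)`), so it is `ℤᵈ[C]`. The isomorphism is the one induced by
`φ`; it sends `Cⁱ e₁ = φ(xⁱ)` to `Xⁱ`.
-/

namespace Polynomial

variable {R : Type*}

def coeffVec [Semiring R] (d : ℕ) : R[X] →ₗ[R] Fin d → R :=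
  LinearMap.pi fun k => lcoeff R k

@[simp]
theorem coeffVec_apply [Semiring R] (d : ℕ) (f : R[X]) (k : Fin d) :
    coeffVec d f k = f.coeff k :=
  rfl

theorem coeffVec_map {S : Type*} [Semiring R] [Semiring S] (φ : R →+* S) (d : ℕ) (f : R[X]) :
    coeffVec d (f.map φ) = φ ∘ coeffVec d f := by
  ext k
  simp

theorem coeffVec_eq_zero_iff [Semiring R] {d : ℕ} {f : R[X]} (hf : f.degree < d) :
    coeffVec d f = 0 ↔ f = 0 := by
  refine ⟨fun h => ext fun n => ?_, fun h => h ▸ map_zero _⟩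
  rcases lt_or_ge n d with hn | hn
  · simpa using congrFun h ⟨n, hn⟩
  · exact (degree_lt_iff_coeff_zero f d).mp hf n hn

theorem X_mul_modByMonic [CommRing R] [Nontrivial R] {q : R[X]} (hq : q.Monic)
    (hq0 : 0 < q.natDegree) (p : R[X]) :
    (X * p) %ₘ q = X * (p %ₘ q) - C ((p %ₘ q).coeff (q.natDegree - 1)) * q := by
  set r := p %ₘ q
  set n := q.natDegree
  have hdeg : q.degree = n := degree_eq_natDegree hq.ne_zero
  have hr : r.degree < n := hdeg ▸ degree_modByMonic_lt p hq
  have hlt : (X * r - C (r.coeff (n - 1)) * q).degree < (n : WithBot ℕ) := by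
    rw [degree_lt_iff_coeff_zero]
    intro m hm
    obtain ⟨m, rfl⟩ : ∃ m', m = m' + 1 := ⟨m - 1, by omega⟩
    rw [coeff_sub, coeff_X_mul, coeff_C_mul]
    rcases hm.eq_or_lt with hm | hm
    · rw [← hm, hq.coeff_natDegree]
      simp [hm]
    · rw [coeff_eq_zero_of_natDegree_lt hm, (degree_lt_iff_coeff_zero r _).mp hr m (by omega)]
      simp
  refine (modByMonic_eq_of_dvd_sub hq ?_).trans ((modByMonic_eq_self_iff hq).mpr (hdeg ▸ hlt))
  rw [show X * p - (X * r - C (r.coeff (n - 1)) * q) = C (r.coeff (n - 1)) * q - X * (r - p) by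
    ring]
  exact dvd_sub (dvd_mul_left q _) ((dvd_modByMonic_sub p q).mul_left X)

theorem IsPrimitive.dvd_map_iff_dvd_of_map_eq_C_mul {P f : ℤ[X]} (hP : P.IsPrimitive) {c : ℚ}
    (hc : c ≠ 0) {q : ℚ[X]} (hPq : P.map (Int.castRingHom ℚ) = C c * q) :
    q ∣ f.map (Int.castRingHom ℚ) ↔ P ∣ f := by
  rw [IsPrimitive.Int.dvd_iff_map_cast_dvd_map_cast _ _ hP, hPq,
    (isUnit_C.mpr (Ne.isUnit hc)).mul_left_dvd]

end Polynomial

theorem exists_linearEquiv_quotient_of_range_of_ker {R A N : Type*} [CommRing R] [CommRing A]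
    [Algebra R A] [AddCommGroup N] [Module R N] (φ : A →ₗ[R] N) {S : Submodule R N}
    {I : Ideal A} (hrange : LinearMap.range φ = S) (hker : LinearMap.ker φ = I.restrictScalars R) :
    ∃ e : S ≃ₗ[R] A ⧸ I, ∀ (x : S) (a : A), (x : N) = φ a → e x = Ideal.Quotient.mk I a := by
  refine ⟨(LinearEquiv.ofEq _ _ hrange).symm ≪≫ₗ φ.quotKerEquivRange.symm ≪≫ₗ
    Submodule.quotEquivOfEq _ _ hker ≪≫ₗ Submodule.Quotient.restrictScalarsEquiv R I, ?_⟩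
  intro x a hx
  have hxa :
      (LinearEquiv.ofEq _ _ hrange).symm x = φ.quotKerEquivRange (Submodule.Quotient.mk a) := by
    ext
    simp [hx]
  rw [LinearEquiv.trans_apply, LinearEquiv.trans_apply, LinearEquiv.trans_apply, hxa,
    LinearEquiv.symm_apply_apply, Submodule.quotEquivOfEq_mk,
    Submodule.Quotient.restrictScalarsEquiv_mk]
  rfl

theorem pow_mulVec_intCast_mem_intSpanSub {n : ℕ} (A : Matrix (Fin n) (Fin n) ℚ) (i : ℕ)
    (v : Fin n → ℤ) : (A ^ i) *ᵥ (fun j => (v j : ℚ)) ∈ intSpanSub A :=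
  Submodule.subset_span ⟨i, v, rfl⟩

def aevalMulVec {n : ℕ} (A : Matrix (Fin n) (Fin n) ℚ) (v : Fin n → ℚ) :
    ℤ[X] →ₗ[ℤ] Fin n → ℚ :=
  (mulVec.addMonoidHomLeft v).toIntLinearMap ∘ₗ (aeval A).toLinearMap

theorem aevalMulVec_apply {n : ℕ} (A : Matrix (Fin n) (Fin n) ℚ) (v : Fin n → ℚ) (f : ℤ[X]) :
    aevalMulVec A v f = aeval A (f.map (Int.castRingHom ℚ)) *ᵥ v := by
  rw [← algebraMap_int_eq, aeval_map_algebraMap]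
  rfl

theorem companionMat_mulVec_coeffVec (d : ℕ) (q r : ℚ[X]) :
    companionMat d q *ᵥ coeffVec d r = coeffVec d (X * r - C (r.coeff (d - 1)) * q) := by
  ext ⟨k, hk⟩
  simp only [mulVec, dotProduct, companionMat, of_apply, add_mul, ite_mul, one_mul, zero_mul,
    Finset.sum_add_distrib, coeffVec_apply, coeff_sub, coeff_C_mul]
  rw [Fin.sum_univ_eq_sum_range (fun i => if k = i + 1 then r.coeff i else 0),
    Fin.sum_univ_eq_sum_range (fun i => if i = d - 1 then -q.coeff k * r.coeff i else 0),
    Finset.sum_ite_eq' _ _ (fun i => -q.coeff k * r.coeff i),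
    if_pos (Finset.mem_range.mpr (by omega))]
  rcases k with _ | k
  · simp [mul_comm]
  · simp only [Nat.add_right_cancel_iff]
    rw [coeff_X_mul, Finset.sum_ite_eq (Finset.range d) k, if_pos (Finset.mem_range.mpr (by omega))]
    ring

section Companion

variable {d : ℕ} {q : ℚ[X]}

theorem aeval_companionMat_mulVec (hq : q.Monic) (hqd : q.natDegree = d) (f : ℚ[X]) :
    aeval (companionMat d q) f *ᵥ coeffVec d 1 = coeffVec d (f %ₘ q) := by
  rcases Nat.eq_zero_or_pos d with rfl | hd
  · exact Subsingleton.elim _ _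
  induction f using Polynomial.induction_on with
  | C a =>
    have hCa : C a %ₘ q = C a :=
      (modByMonic_eq_self_iff hq).mpr <| degree_C_le.trans_lt <| by
        rw [degree_eq_natDegree hq.ne_zero, hqd]; exact_mod_cast hd
    rw [hCa, aeval_C, Algebra.algebraMap_eq_smul_one, smul_mulVec, one_mulVec, ← map_smul, ← C_1,
      smul_C, smul_eq_mul, mul_one]
  | add f g hf hg =>
    rw [map_add, add_mulVec, hf, hg, add_modByMonic, map_add]
  | monomial n a ih =>
    rw [pow_succ', mul_left_comm, map_mul, aeval_X, ← mulVec_mulVec, ih,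
      companionMat_mulVec_coeffVec, X_mul_modByMonic hq (hqd ▸ hd), hqd]

theorem aeval_companionMat_mulVec_of_degree_lt (hq : q.Monic) (hqd : q.natDegree = d)
    {r : ℚ[X]} (hr : r.degree < q.degree) :
    aeval (companionMat d q) r *ᵥ coeffVec d 1 = coeffVec d r := by
  rw [aeval_companionMat_mulVec hq hqd, (modByMonic_eq_self_iff hq).mpr hr]

theorem aeval_companionMat_mulVec_eq_zero_iff (hq : q.Monic) (hqd : q.natDegree = d)
    (f : ℚ[X]) : aeval (companionMat d q) f *ᵥ coeffVec d 1 = 0 ↔ q ∣ f := by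
  have hlt : (f %ₘ q).degree < d := by
    rw [← hqd, ← degree_eq_natDegree hq.ne_zero]
    exact degree_modByMonic_lt f hq
  rw [aeval_companionMat_mulVec hq hqd, coeffVec_eq_zero_iff hlt, modByMonic_eq_zero_iff_dvd hq]

theorem range_aevalMulVec_companionMat (hq : q.Monic) (hqd : q.natDegree = d) :
    LinearMap.range (aevalMulVec (companionMat d q) (coeffVec d 1)) =
      intSpanSub (companionMat d q) := by
  apply le_antisymm
  · rintro _ ⟨f, rfl⟩
    induction f using Polynomial.induction_on' with
    | add f g hf hg => rw [map_add]; exact add_mem hf hg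
    | monomial n a =>
      rw [← smul_X_eq_monomial, map_smul, aevalMulVec_apply, Polynomial.map_pow, map_X,
        aeval_X_pow, ← Polynomial.map_one (Int.castRingHom ℚ), coeffVec_map]
      exact Submodule.smul_mem _ a (pow_mulVec_intCast_mem_intSpanSub _ n _)
  · rw [intSpanSub, Submodule.span_le]
    rintro _ ⟨i, v, rfl⟩
    obtain ⟨⟨r, hr⟩, hrv : coeffVec d r = v⟩ := (degreeLTEquiv ℤ d).surjective v
    have hr' : (r.map (Int.castRingHom ℚ)).degree < q.degree := by
      rw [degree_eq_natDegree hq.ne_zero, hqd]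
      exact degree_map_le.trans_lt (mem_degreeLT.mp hr)
    refine ⟨X ^ i * r, ?_⟩
    rw [aevalMulVec_apply, Polynomial.map_mul, map_mul, ← mulVec_mulVec,
      aeval_companionMat_mulVec_of_degree_lt hq hqd hr', coeffVec_map, hrv, Polynomial.map_pow,
      map_X, aeval_X_pow]
    rfl

theorem ker_aevalMulVec_companionMat (hq : q.Monic) (hqd : q.natDegree = d) {P : ℤ[X]}
    (hP : P.IsPrimitive) {c : ℚ} (hc : c ≠ 0) (hPq : P.map (Int.castRingHom ℚ) = C c * q) :
    LinearMap.ker (aevalMulVec (companionMat d q) (coeffVec d 1)) =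
      (Ideal.span {P}).restrictScalars ℤ := by
  ext f
  rw [LinearMap.mem_ker, aevalMulVec_apply, aeval_companionMat_mulVec_eq_zero_iff hq hqd,
    hP.dvd_map_iff_dvd_of_map_eq_C_mul hc hPq, Submodule.restrictScalars_mem,
    Ideal.mem_span_singleton]

end Companion

theorem stmt12_general (d : ℕ) (P : Polynomial ℤ)
    (hdeg : P.natDegree = d) (hprim : P.IsPrimitive)
    (c : ℤ) (q : Polynomial ℚ) (hq : q.Monic)
    (hPq : P.map (Int.castRingHom ℚ) = Polynomial.C (c : ℚ) * q)
    (Cm : Matrix (Fin d) (Fin d) ℚ) (hCm : Cm = companionMat d q)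
    (e₁ : Fin d → ℚ) (he₁ : e₁ = fun j : Fin d => if (j : ℕ) = 0 then 1 else 0) :
    (∀ i : ℕ, (Cm ^ i).mulVec e₁ ∈ intSpanSub Cm) ∧
    ∃ h : intSpanSub Cm ≃ₗ[ℤ] Polynomial ℤ ⧸ Ideal.span {P},
      ∀ (x : intSpanSub Cm) (i : ℕ),
        (x : Fin d → ℚ) = (Cm ^ i).mulVec e₁ →
        h x = (Ideal.Quotient.mk (Ideal.span {P}) X) ^ i := by
  have hPmap : P.map (Int.castRingHom ℚ) ≠ 0 :=
    (Polynomial.map_ne_zero_iff (RingHom.injective_int _)).mpr hprim.ne_zero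
  have hc : (c : ℚ) ≠ 0 := C_ne_zero.mp (left_ne_zero_of_mul (hPq ▸ hPmap))
  have hqd : q.natDegree = d := by
    rw [← hdeg, ← natDegree_map_eq_of_injective (RingHom.injective_int (Int.castRingHom ℚ)) P, hPq,
      natDegree_C_mul hc]
  have he₁ : e₁ = coeffVec d 1 := by
    ext j
    simp [he₁, coeff_one]
  subst hCm he₁
  have hrange := range_aevalMulVec_companionMat hq hqd
  have hpow (i : ℕ) : aevalMulVec (companionMat d q) (coeffVec d 1) (X ^ i) =
      companionMat d q ^ i *ᵥ coeffVec d 1 := by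
    simp [aevalMulVec_apply]
  obtain ⟨h, hh⟩ := exists_linearEquiv_quotient_of_range_of_ker _ hrange
    (ker_aevalMulVec_companionMat hq hqd hprim hc hPq)
  refine ⟨fun i => hrange ▸ hpow i ▸ LinearMap.mem_range_self _ _, h, fun x i hx => ?_⟩
  rw [hh x (X ^ i) (hx.trans (hpow i).symm), map_pow]

/-- there is a `ℤ`-module isomorphism
`h : ℤᵈ[C] ≃ ℤ[x]/Pℤ[x]` with `h(Cⁱe₁) = Xⁱ` for all `i ∈ ℕ`. -/
theorem stmt12 (d : ℕ) (hd : 1 ≤ d) (P : Polynomial ℤ)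
    (hdeg : P.natDegree = d) (hprim : P.IsPrimitive)
    (hlead : P.coeff d ≠ 0) (h0 : P.coeff 0 ≠ 0)
    (c : ℤ) (q : Polynomial ℚ) (hq : q.Monic)
    (hPq : P.map (Int.castRingHom ℚ) = Polynomial.C (c : ℚ) * q)
    (Cm : Matrix (Fin d) (Fin d) ℚ) (hCm : Cm = companionMat d q)
    (e₁ : Fin d → ℚ) (he₁ : e₁ = fun j : Fin d => if (j : ℕ) = 0 then 1 else 0) :
    (∀ i : ℕ, (Cm ^ i).mulVec e₁ ∈ intSpanSub Cm) ∧
    ∃ h : intSpanSub Cm ≃ₗ[ℤ] Polynomial ℤ ⧸ Ideal.span {P},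
      ∀ (x : intSpanSub Cm) (i : ℕ),
        (x : Fin d → ℚ) = (Cm ^ i).mulVec e₁ →
        h x = (Ideal.Quotient.mk (Ideal.span {P}) X) ^ i :=
  stmt12_general d P hdeg hprim c q hq hPq Cm hCm e₁ he₁
end
end

section
/- With h : ℤ²[A] → ℛ the ℤ-module isomorphism satisfying h(A^i e₁) = X^i for all i ∈ ℕ, the dynamical systems Φ and T are conjugate via h: T ∘ h = h ∘ Φ as maps from ℤ²[A] to ℛ. -/
/-!
Since `A e₁ = e₂`, the lattice `ℤ²[A]` is spanned by the vectors `Aⁱ e₁`, so `h` turns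
multiplication by `A` into multiplication by `X`, and it sends the digit `(ν, 0)ᵀ` to `ν`.
Hence `x = d(x) + A Φ(x)` gives `h x = ν + X h(Φ x)`, while `h x = ν' + X T(h x)`.
Thus `X` divides `ν - ν'` in `ℛ`; evaluating at `0` shows `b ∣ ν - ν'`, so `ν = ν'` as both
digits lie in `[0, |b|)`. Finally `X` is a non-zero-divisor of `ℛ`: it is prime in `ℤ[x]` and
does not divide `q`, because `b ≠ 0` (the digit set is nonempty).
-/

open Matrix Polynomial

noncomputable section

theorem Submodule.span_coe_preimage_eq_top_of_eq {R M : Type*} [Semiring R] [AddCommMonoid M]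
    [Module R M] {S : Submodule R M} {s : Set M} (hS : S = span R s) :
    span R (((↑) : S → M) ⁻¹' s) = ⊤ := by
  subst hS
  exact span_span_coe_preimage

theorem IsLeftRegular.eq_of_mul_add_intCast_eq {R : Type*} [Ring R] {t u u' : R} {ν ν' : ℤ}
    (ht : IsLeftRegular t) (hdigits : t ∣ ((ν - ν' : ℤ) : R) → ν = ν')
    (h : t * u + ν = t * u' + ν') : u = u' := by
  obtain rfl := hdigits
    ⟨u' - u, by rw [Int.cast_sub, mul_sub, sub_eq_sub_iff_add_eq_add, add_comm, h]⟩
  exact ht (add_right_cancel h)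

namespace Polynomial

variable {R : Type*} [CommRing R] {Q : R[X]}

theorem coeff_zero_dvd_of_mk_X_dvd {m : R}
    (h : Ideal.Quotient.mk (Ideal.span {Q}) X ∣ Ideal.Quotient.mk (Ideal.span {Q}) (C m)) :
    Q.coeff 0 ∣ m := by
  obtain ⟨s, hs⟩ := h
  obtain ⟨s, rfl⟩ := Ideal.Quotient.mk_surjective s
  rw [← map_mul, Ideal.Quotient.eq, Ideal.mem_span_singleton] at hs
  obtain ⟨g, hg⟩ := hs
  refine ⟨g.eval 0, ?_⟩
  simpa [coeff_zero_eq_eval_zero] using congrArg (eval 0) hg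

theorem isLeftRegular_mk_X [IsDomain R] (hQ : Q.coeff 0 ≠ 0) :
    IsLeftRegular (Ideal.Quotient.mk (Ideal.span {Q}) X) := by
  intro f g hfg
  obtain ⟨f, rfl⟩ := Ideal.Quotient.mk_surjective f
  obtain ⟨g, rfl⟩ := Ideal.Quotient.mk_surjective g
  simp only [← map_mul, Ideal.Quotient.eq, Ideal.mem_span_singleton, ← mul_sub] at hfg ⊢
  obtain ⟨u, hu⟩ := hfg
  obtain ⟨w, rfl⟩ : X ∣ u :=
    (prime_X.dvd_or_dvd ⟨_, hu.symm⟩).resolve_left (by rwa [X_dvd_iff])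
  exact ⟨w, mul_left_cancel₀ X_ne_zero (by rw [hu]; ring)⟩

theorem eq_of_mk_X_dvd_intCast_sub {Q : ℤ[X]} {ν ν' : ℤ} (hν : 0 ≤ ν) (hνQ : ν < |Q.coeff 0|)
    (hν' : 0 ≤ ν') (hν'Q : ν' < |Q.coeff 0|)
    (h : Ideal.Quotient.mk (Ideal.span {Q}) X ∣ ((ν - ν' : ℤ) : ℤ[X] ⧸ Ideal.span {Q})) :
    ν = ν' := by
  rw [← map_intCast (Ideal.Quotient.mk (Ideal.span {Q})), ← C_eq_intCast, Int.cast_id] at h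
  have hlt : |ν - ν'| < |Q.coeff 0| := by rw [abs_sub_lt_iff]; omega
  have := Int.eq_zero_of_abs_lt_dvd ((abs_dvd _ _).2 (coeff_zero_dvd_of_mk_X_dvd h)) hlt
  omega

end Polynomial

namespace intSpanSub

variable {n : ℕ} (A : Matrix (Fin n) (Fin n) ℚ)

theorem pow_mulVec_intCast_mem (i : ℕ) (v : Fin n → ℤ) :
    (A ^ i) *ᵥ (fun j => (v j : ℚ)) ∈ intSpanSub A :=
  Submodule.subset_span ⟨i, v, rfl⟩

theorem mulVec_mem {x : Fin n → ℚ} (hx : x ∈ intSpanSub A) : A *ᵥ x ∈ intSpanSub A := by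
  have : intSpanSub A ≤ (intSpanSub A).comap ((mulVecLin A).restrictScalars ℤ) := by
    refine Submodule.span_le.2 ?_
    rintro _ ⟨i, v, rfl⟩
    simpa [mulVec_mulVec, ← pow_succ'] using pow_mulVec_intCast_mem A (i + 1) v
  exact this hx

def mulVecEnd : intSpanSub A →ₗ[ℤ] intSpanSub A :=
  ((mulVecLin A).restrictScalars ℤ).restrict fun _ => mulVec_mem A

@[simp]
theorem coe_mulVecEnd (x : intSpanSub A) : (mulVecEnd A x : Fin n → ℚ) = A *ᵥ x := rfl

theorem eq_span_pow_mulVec_single (j₀ : Fin n)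
    (hA : ∀ j, ∃ k : ℕ, (A ^ k) *ᵥ Pi.single j₀ 1 = Pi.single j 1) :
    intSpanSub A = Submodule.span ℤ (Set.range fun i : ℕ => (A ^ i) *ᵥ Pi.single j₀ 1) := by
  choose k hk using hA
  refine le_antisymm (Submodule.span_le.2 ?_) (Submodule.span_le.2 ?_)
  · rintro _ ⟨i, v, rfl⟩
    rw [← Finset.univ_sum_single fun j => (v j : ℚ), mulVec_sum]
    refine Submodule.sum_mem _ fun j _ => ?_
    have hj : (A ^ i) *ᵥ Pi.single j (v j : ℚ) = v j • (A ^ (i + k j)) *ᵥ Pi.single j₀ 1 := by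
      rw [pow_add, ← mulVec_mulVec, hk, ← Int.cast_smul_eq_zsmul ℚ, ← mulVec_smul,
        ← Pi.single_smul', smul_eq_mul, mul_one]
    rw [hj]
    exact Submodule.smul_mem _ _ (Submodule.subset_span ⟨_, rfl⟩)
  · rintro _ ⟨i, rfl⟩
    rw [SetLike.mem_coe]
    convert pow_mulVec_intCast_mem A i (Pi.single j₀ 1) using 2
    ext j
    by_cases hj : j = j₀ <;> simp [hj]

theorem map_mulVecEnd {R : Type*} [Ring R] (h : intSpanSub A →ₗ[ℤ] R) (t : R) (j₀ : Fin n)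
    (hA : ∀ j, ∃ k : ℕ, (A ^ k) *ᵥ Pi.single j₀ 1 = Pi.single j 1)
    (hh : ∀ (x : intSpanSub A) (i : ℕ), (x : Fin n → ℚ) = (A ^ i) *ᵥ Pi.single j₀ 1 → h x = t ^ i)
    (x : intSpanSub A) : h (mulVecEnd A x) = t * h x := by
  suffices h ∘ₗ mulVecEnd A = LinearMap.mulLeft ℤ t ∘ₗ h from LinearMap.congr_fun this x
  refine LinearMap.ext_on
    (Submodule.span_coe_preimage_eq_top_of_eq (eq_span_pow_mulVec_single A j₀ hA)) ?_
  rintro y ⟨i, hi⟩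
  rw [LinearMap.comp_apply, LinearMap.comp_apply, LinearMap.mulLeft_apply, hh y i hi.symm,
    hh _ (i + 1) (by rw [coe_mulVecEnd, ← hi, mulVec_mulVec, pow_succ']), pow_succ']

end intSpanSub

theorem digitVec_mem (A : Matrix (Fin 2) (Fin 2) ℚ) (ν : ℤ) : digitVec ν ∈ intSpanSub A := by
  convert intSpanSub.pow_mulVec_intCast_mem A 0 ![ν, 0]
  ext j
  fin_cases j <;> simp [digitVec]

theorem map_digitVec {R : Type*} [Ring R] {A : Matrix (Fin 2) (Fin 2) ℚ}
    (h : intSpanSub A →ₗ[ℤ] R) (h1 : h ⟨digitVec 1, digitVec_mem A 1⟩ = 1) (ν : ℤ) :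
    h ⟨digitVec ν, digitVec_mem A ν⟩ = ν := by
  have e : (⟨digitVec ν, digitVec_mem A ν⟩ : intSpanSub A) = ν • ⟨digitVec 1, digitVec_mem A 1⟩ :=
    Subtype.ext (by ext j; fin_cases j <;> simp [digitVec])
  rw [e, map_zsmul, h1, zsmul_one]

theorem companion_pow_mulVec_single (α β : ℚ) (j : Fin 2) :
    (!![0, -β; 1, -α] ^ (j : ℕ)) *ᵥ Pi.single 0 1 = Pi.single j 1 := by
  ext i
  fin_cases j <;> fin_cases i <;> simp [mulVec, dotProduct, Fin.sum_univ_succ]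

theorem stmt15_general (α β : ℚ)
    (c a b : ℤ)
    (A : Matrix (Fin 2) (Fin 2) ℚ) (hA : A = !![0, -β; 1, -α])
    (Φ : (Fin 2 → ℚ) → Fin 2 → ℚ)
    (hΦmem : ∀ x ∈ intSpanSub A, Φ x ∈ intSpanSub A)
    (hΦ : ∀ x ∈ intSpanSub A, ∃ ν : ℤ, 0 ≤ ν ∧ ν ≤ |b| - 1 ∧
      x = digitVec ν + A.mulVec (Φ x))
    (Q : Polynomial ℤ)
    (hQ : Q = Polynomial.C c * X ^ 2 + Polynomial.C a * X + Polynomial.C b)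
    (T : (Polynomial ℤ ⧸ Ideal.span {Q}) → Polynomial ℤ ⧸ Ideal.span {Q})
    (hT : ∀ r : Polynomial ℤ ⧸ Ideal.span {Q}, ∃ ν : ℤ, 0 ≤ ν ∧ ν ≤ |b| - 1 ∧
      (Ideal.Quotient.mk (Ideal.span {Q}) X) * T r = r - (ν : Polynomial ℤ ⧸ Ideal.span {Q}))
    (h : intSpanSub A ≃ₗ[ℤ] Polynomial ℤ ⧸ Ideal.span {Q})
    (hh : ∀ (x : intSpanSub A) (i : ℕ),
      (x : Fin 2 → ℚ) = (A ^ i).mulVec ![1, 0] →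
      h x = (Ideal.Quotient.mk (Ideal.span {Q}) X) ^ i) :
    ∀ x : intSpanSub A, T (h x) = h ⟨Φ x, hΦmem x x.2⟩ := by
  have he₁ : (Pi.single 0 1 : Fin 2 → ℚ) = ![1, 0] := by ext j; fin_cases j <;> simp
  have hAX (y : intSpanSub A) : h (intSpanSub.mulVecEnd A y) = Ideal.Quotient.mk _ X * h y :=
    intSpanSub.map_mulVecEnd A h.toLinearMap _ 0
      (fun j => ⟨j, hA ▸ companion_pow_mulVec_single α β j⟩) (fun x i hx => hh x i (he₁ ▸ hx)) y
  have hdigit : ∀ ν, h ⟨digitVec ν, digitVec_mem A ν⟩ = ν :=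
    map_digitVec h.toLinearMap (by simpa using hh _ 0 (by simp [digitVec]))
  have hQ₀ : Q.coeff 0 = b := by simp [hQ]
  intro x
  obtain ⟨ν, hν₀, hνb, hx⟩ := hΦ x x.2
  obtain ⟨ν', hν'₀, hν'b, hTx⟩ := hT (h x)
  rw [← hQ₀] at hνb hν'b
  have hb : 0 < |Q.coeff 0| := by omega
  have hdigits := Polynomial.eq_of_mk_X_dvd_intCast_sub (Q := Q) hν'₀ (by omega) hν₀ (by omega)
  refine (Polynomial.isLeftRegular_mk_X (abs_pos.1 hb)).eq_of_mul_add_intCast_eq hdigits ?_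
  calc _ = h x := by rw [hTx, sub_add_cancel]
    _ = h (⟨digitVec ν, digitVec_mem A ν⟩ + intSpanSub.mulVecEnd A ⟨Φ x, hΦmem x x.2⟩) :=
      congrArg h (Subtype.ext hx)
    _ = _ := by rw [map_add, hdigit, hAX, add_comm]

/-- the dynamical systems `Φ` (on `ℤ²[A]`) and `T`
(on `ℛ = ℤ[x]/qℤ[x]`) are conjugate via the `ℤ`-module isomorphism `h` with
`h(Aⁱe₁) = Xⁱ`: one has `T ∘ h = h ∘ Φ`. -/
theorem stmt15 (α β : ℚ)
    (hirr : Irreducible (X ^ 2 + C α * X + C β : ℚ[X]))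
    (c a b : ℤ) (hc : 0 < c)
    (ha : (a : ℚ) = (c : ℚ) * α) (hb : (b : ℚ) = (c : ℚ) * β)
    (hprim : Int.gcd c (Int.gcd a b) = 1)
    (A : Matrix (Fin 2) (Fin 2) ℚ) (hA : A = !![0, -β; 1, -α])
    (Φ : (Fin 2 → ℚ) → Fin 2 → ℚ)
    (hΦmem : ∀ x ∈ intSpanSub A, Φ x ∈ intSpanSub A)
    (hΦ : ∀ x ∈ intSpanSub A, ∃ ν : ℤ, 0 ≤ ν ∧ ν ≤ |b| - 1 ∧
      x = digitVec ν + A.mulVec (Φ x))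
    (Q : Polynomial ℤ)
    (hQ : Q = Polynomial.C c * X ^ 2 + Polynomial.C a * X + Polynomial.C b)
    (T : (Polynomial ℤ ⧸ Ideal.span {Q}) → Polynomial ℤ ⧸ Ideal.span {Q})
    (hT : ∀ r : Polynomial ℤ ⧸ Ideal.span {Q}, ∃ ν : ℤ, 0 ≤ ν ∧ ν ≤ |b| - 1 ∧
      (Ideal.Quotient.mk (Ideal.span {Q}) X) * T r = r - (ν : Polynomial ℤ ⧸ Ideal.span {Q}))
    (h : intSpanSub A ≃ₗ[ℤ] Polynomial ℤ ⧸ Ideal.span {Q})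
    (hh : ∀ (x : intSpanSub A) (i : ℕ),
      (x : Fin 2 → ℚ) = (A ^ i).mulVec ![1, 0] →
      h x = (Ideal.Quotient.mk (Ideal.span {Q}) X) ^ i) :
    ∀ x : intSpanSub A, T (h x) = h ⟨Φ x, hΦmem x x.2⟩ :=
  stmt15_general α β c a b A hA Φ hΦmem hΦ Q hQ T hT h hh
end
end

section
/- The polynomial P(x) = cx² + ax + b is a CNS polynomial if and only if (c/b, a/b) ∈ 𝒟₂⁽⁰⁾; that is, every element of ℤ[x]/Pℤ[x] has a finite digit expansion with digits in {0, 1, …, |b| − 1} if and only if for every z ∈ ℤ² some iterate of the shift radix map τ_{(c/b, a/b)} sends z to (0, 0). -/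
/-!
For `b > 0`, represent a class of `ℤ[X]/(P)` by a polynomial `f` and peel off digits:
`f ≡ (f(0) mod b) + X · step f (mod P)`, and `step` lowers the degree until it is at most one.
The digit is forced (`P(0) = b` and `X` is cancellable modulo `P`), so `f` has a finite expansion
iff some iterate of `step` vanishes. Two steps take a linear polynomial into the image of
`embed z = (c z₁ + a z₂) + c z₂ X`, and `step ∘ embed = embed ∘ τ` for `τ = τ_{(c/b, a/b)}`,
because for `b > 0` the floor of `m / b` is Euclidean division. As `embed` is injective, all
orbits of `step` die iff all orbits of `τ` do.

For `b < 0` both sides fail: evaluating at the positive root of `P` shows that `-1` has no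
expansion with nonnegative digits, and as `c / b < 0` the `τ`-orbit of `(1, 0)` stays in a cone
avoiding the origin.
-/

open Polynomial

noncomputable section

/-- The shift radix system map `τ_r : ℤ² → ℤ²` for `r = (r₀, r₁) ∈ ℝ²`:
`τ_r(z₀, z₁) = (z₁, -⌊r₀ z₀ + r₁ z₁⌋)`. -/
def srsMap (r₀ r₁ : ℝ) : ℤ × ℤ → ℤ × ℤ :=
  fun z => (z.2, -⌊r₀ * z.1 + r₁ * z.2⌋)

open Set Function

theorem Int.floor_intCast_div_intCast (m : ℤ) {b : ℤ} (hb : 0 < b) : ⌊(m : ℝ) / b⌋ = m / b := by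
  lift b to ℕ using hb.le
  rw [← Rat.floor_intCast_div_natCast, ← Rat.floor_cast (α := ℝ)]
  push_cast
  rfl

theorem Polynomial.coeff_iterate_divX {R : Type*} [Semiring R] (p : R[X]) (n i : ℕ) :
    (divX^[n] p).coeff i = p.coeff (i + n) := by
  induction n generalizing i with
  | zero => rfl
  | succ n ih => rw [iterate_succ_apply', coeff_divX, ih, add_assoc, add_comm 1]

theorem Polynomial.iterate_divX_eq_zero {R : Type*} [Semiring R] {p : R[X]} {n : ℕ}
    (h : p.natDegree < n) : divX^[n] p = 0 := by
  ext i
  rw [coeff_iterate_divX, coeff_zero]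
  exact coeff_eq_zero_of_natDegree_lt (by omega)

theorem Polynomial.aeval_nonneg_of_coeff_nonneg {θ : ℝ} (hθ : 0 ≤ θ) {g : ℤ[X]}
    (hg : ∀ i, 0 ≤ g.coeff i) : 0 ≤ aeval θ g := by
  rw [aeval_eq_sum_range]
  refine Finset.sum_nonneg fun i _ => ?_
  rw [zsmul_eq_mul]
  exact mul_nonneg (mod_cast hg i) (pow_nonneg hθ i)

theorem exists_digit_sum_iff_exists_aeval {R : Type*} [CommRing R] (x r : R) {D : Set ℤ}
    (hD : 0 ∈ D) :
    (∃ (ℓ : ℕ) (dd : ℕ → ℤ), (∀ i ≤ ℓ, dd i ∈ D) ∧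
        r = ∑ i ∈ Finset.range (ℓ + 1), (dd i : R) * x ^ i) ↔
      ∃ g : ℤ[X], (∀ i, g.coeff i ∈ D) ∧ aeval x g = r := by
  constructor
  · rintro ⟨ℓ, dd, hdd, rfl⟩
    refine ⟨∑ i ∈ Finset.range (ℓ + 1), C (dd i) * X ^ i, fun j => ?_, by simp⟩
    simp only [finsetSum_coeff, coeff_C_mul_X_pow, Finset.sum_ite_eq, Finset.mem_range]
    split_ifs with hj
    · exact hdd j (by omega)
    · exact hD
  · rintro ⟨g, hg, rfl⟩
    exact ⟨g.natDegree, g.coeff, fun i _ => hg i, by simp [aeval_eq_sum_range, zsmul_eq_mul]⟩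

theorem forall_exists_digit_sum_iff (P : ℤ[X]) {D : Set ℤ} (hD : 0 ∈ D) :
    (∀ r : ℤ[X] ⧸ Ideal.span {P}, ∃ (ℓ : ℕ) (dd : ℕ → ℤ), (∀ i ≤ ℓ, dd i ∈ D) ∧
        r = ∑ i ∈ Finset.range (ℓ + 1),
          (dd i : ℤ[X] ⧸ Ideal.span {P}) * (Ideal.Quotient.mk (Ideal.span {P}) X) ^ i) ↔
      ∀ f : ℤ[X], ∃ g : ℤ[X], (∀ i, g.coeff i ∈ D) ∧ P ∣ f - g := by
  refine Ideal.Quotient.mk_surjective.forall.trans (forall_congr' fun f => ?_)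
  rw [exists_digit_sum_iff_exists_aeval _ _ hD]
  refine exists_congr fun g => and_congr_right fun _ => ?_
  rw [← Ideal.Quotient.mkₐ_eq_mk ℤ, aeval_algHom_apply, aeval_X_left_apply,
    Ideal.Quotient.mkₐ_eq_mk, Ideal.Quotient.eq, Ideal.mem_span_singleton, dvd_sub_comm]

section SRS

variable {r₀ r₁ : ℝ}

theorem srsMap_mapsTo_of_nonpos (hr₀ : r₀ < 0) (hr₁ : r₁ ≤ 0) :
    MapsTo (srsMap r₀ r₁) {z | 0 ≤ z.1 ∧ 0 ≤ z.2 ∧ 0 < z.1 + z.2}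
      {z | 0 ≤ z.1 ∧ 0 ≤ z.2 ∧ 0 < z.1 + z.2} := by
  rintro ⟨z₁, z₂⟩ ⟨h₁, h₂, h₁₂⟩
  have hz₁ : (0 : ℝ) ≤ z₁ := by exact_mod_cast h₁
  have hz₂ : (0 : ℝ) ≤ z₂ := by exact_mod_cast h₂
  have hnonpos : ⌊r₀ * z₁ + r₁ * z₂⌋ ≤ 0 := Int.floor_nonpos (by nlinarith)
  have hneg : z₂ = 0 → ⌊r₀ * z₁ + r₁ * z₂⌋ < 0 := by
    rintro rfl
    have : (1 : ℝ) ≤ z₁ := by exact_mod_cast (by omega : 1 ≤ z₁)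
    exact Int.floor_lt.2 (by push_cast; nlinarith)
  simp only [srsMap, mem_ofPred_eq]
  omega

theorem srsMap_mapsTo_of_nonneg (hr₀ : r₀ < 0) (hr₁ : 0 ≤ r₁) :
    MapsTo (srsMap r₀ r₁) {z | (0 < z.1 ∧ z.2 ≤ 0) ∨ (z.1 ≤ 0 ∧ 0 < z.2)}
      {z | (0 < z.1 ∧ z.2 ≤ 0) ∨ (z.1 ≤ 0 ∧ 0 < z.2)} := by
  rintro ⟨z₁, z₂⟩ (⟨h₁, h₂⟩ | ⟨h₁, h₂⟩)
  · have hz₁ : (1 : ℝ) ≤ z₁ := by exact_mod_cast h₁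
    have hz₂ : (z₂ : ℝ) ≤ 0 := by exact_mod_cast h₂
    have : ⌊r₀ * z₁ + r₁ * z₂⌋ < 0 := Int.floor_lt.2 (by push_cast; nlinarith)
    simp only [srsMap, mem_ofPred_eq]
    omega
  · have hz₁ : (z₁ : ℝ) ≤ 0 := by exact_mod_cast h₁
    have hz₂ : (0 : ℝ) ≤ z₂ := by exact_mod_cast h₂.le
    have : 0 ≤ ⌊r₀ * z₁ + r₁ * z₂⌋ := Int.floor_nonneg.2 (by nlinarith)
    simp only [srsMap, mem_ofPred_eq]
    omega

theorem not_forall_exists_iterate_srsMap_eq_zero (hr₀ : r₀ < 0) :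
    ¬ ∀ z : ℤ × ℤ, ∃ k : ℕ, (srsMap r₀ r₁)^[k] z = (0, 0) := by
  intro h
  obtain ⟨k, hk⟩ := h (1, 0)
  rcases le_total r₁ 0 with hr₁ | hr₁
  · have := srsMap_mapsTo_of_nonpos hr₀ hr₁ |>.iterate k (by simp : ((1, 0) : ℤ × ℤ) ∈ _)
    simp [hk] at this
  · have := srsMap_mapsTo_of_nonneg hr₀ hr₁ |>.iterate k (by simp : ((1, 0) : ℤ × ℤ) ∈ _)
    simp [hk] at this

end SRS

namespace QuadraticCNS

variable (c a b : ℤ)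

def quad : ℤ[X] := C c * X ^ 2 + C a * X + C b

def step (f : ℤ[X]) : ℤ[X] := f.divX - C (f.coeff 0 / b) * (C c * X + C a)

def embed (z : ℤ × ℤ) : ℤ[X] := C (c * z.1 + a * z.2) + C (c * z.2) * X

def srsInt (z : ℤ × ℤ) : ℤ × ℤ := (z.2, -((c * z.1 + a * z.2) / b))

def digitPoly (n : ℕ) (f : ℤ[X]) : ℤ[X] :=
  ∑ i ∈ Finset.range n, C (((step c a b)^[i] f).coeff 0 % b) * X ^ i

theorem srsMap_div_eq_srsInt (hb : 0 < b) :
    srsMap ((c : ℝ) / b) ((a : ℝ) / b) = srsInt c a b := by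
  ext z <;> simp only [srsMap, srsInt]
  rw [← Int.floor_intCast_div_intCast _ hb]
  push_cast
  ring_nf

theorem coeff_quad_zero : (quad c a b).coeff 0 = b := by simp [quad]

theorem natDegree_quad (hc : c ≠ 0) : (quad c a b).natDegree = 2 :=
  natDegree_quadratic hc

theorem eq_digit_add_X_mul_step (f : ℤ[X]) :
    f = C (f.coeff 0 % b) + X * step c a b f + C (f.coeff 0 / b) * quad c a b := by
  have hdiv := X_mul_divX_add f
  have hmod : C (f.coeff 0 % b) + C b * C (f.coeff 0 / b) = C (f.coeff 0) := by
    rw [← C_mul, ← C_add, Int.emod_add_mul_ediv]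
  simp only [step, quad]
  linear_combination -hdiv - hmod

theorem natDegree_step_le (f : ℤ[X]) : (step c a b f).natDegree ≤ max (f.natDegree - 1) 1 := by
  refine (natDegree_sub_le _ _).trans (max_le_max (natDegree_divX_eq_natDegree_tsub_one).le ?_)
  refine (natDegree_C_mul_le _ _).trans ((natDegree_add_le _ _).trans (max_le ?_ ?_))
  · exact (natDegree_C_mul_le _ _).trans natDegree_X_le
  · simp

theorem natDegree_iterate_step_le {n : ℕ} {f : ℤ[X]} (hf : f.natDegree ≤ n + 1) :
    ((step c a b)^[n] f).natDegree ≤ 1 := by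
  induction n generalizing f with
  | zero => exact hf
  | succ n ih =>
    rw [iterate_succ_apply]
    exact ih ((natDegree_step_le c a b f).trans (max_le (by omega) (by omega)))

theorem step_linear (s t : ℤ) :
    step c a b (C s + C t * X) = C (t + a * -(s / b)) + C (c * -(s / b)) * X := by
  have hdivX : (C s + C t * X).divX = C t := by
    rw [divX_add, divX_C, ← pow_one (X : ℤ[X]), divX_C_mul_X_pow, if_neg one_ne_zero,
      Nat.sub_self, pow_zero, mul_one, zero_add]
  simp only [step, hdivX, coeff_add, coeff_C_zero, coeff_mul_X_zero, add_zero, C_add, C_mul, C_neg]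
  ring

theorem step_embed (z : ℤ × ℤ) : step c a b (embed c a z) = embed c a (srsInt c a b z) :=
  step_linear c a b _ _

theorem iterate_step_embed (n : ℕ) (z : ℤ × ℤ) :
    (step c a b)^[n] (embed c a z) = embed c a ((srsInt c a b)^[n] z) :=
  ((Semiconj.iterate_right (fun z => (step_embed c a b z).symm) n) z).symm

theorem step_step_eq_embed {f : ℤ[X]} (hf : f.natDegree ≤ 1) :
    ∃ z, step c a b (step c a b f) = embed c a z := by
  obtain ⟨t, s, rfl⟩ : ∃ t s, f = C s + C t * X := by
    refine ⟨f.coeff 1, f.coeff 0, ?_⟩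
    conv_lhs => rw [eq_X_add_C_of_natDegree_le_one hf]
    ring
  refine ⟨(-(s / b), -((t + a * -(s / b)) / b)), ?_⟩
  rw [step_linear, step_linear]
  rfl

theorem exists_iterate_step_eq_embed (f : ℤ[X]) : ∃ n z, (step c a b)^[n] f = embed c a z := by
  obtain ⟨z, hz⟩ := step_step_eq_embed c a b (natDegree_iterate_step_le c a b (n := f.natDegree)
    (f := f) (by omega))
  exact ⟨f.natDegree + 2, z, by rw [iterate_succ_apply', iterate_succ_apply', hz]⟩

theorem eq_zero_of_embed_eq_zero (hc : c ≠ 0) {z : ℤ × ℤ} (h : embed c a z = 0) :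
    z = (0, 0) := by
  have h₀ := congrArg (coeff · 0) h
  have h₁ := congrArg (coeff · 1) h
  simp only [embed, coeff_add, coeff_C_zero, coeff_mul_X_zero, coeff_C_mul_X, coeff_zero,
    coeff_C_of_ne_zero one_ne_zero] at h₀ h₁
  have h₂ : z.2 = 0 := (mul_eq_zero.1 (by simpa using h₁)).resolve_left hc
  have h₁ : z.1 = 0 := (mul_eq_zero.1 (by simpa [h₂] using h₀)).resolve_left hc
  exact Prod.ext h₁ h₂

theorem eq_zero_of_quad_dvd (hc : c ≠ 0) {f : ℤ[X]} (hf : f.natDegree ≤ 1)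
    (h : quad c a b ∣ f) : f = 0 := by
  by_contra hne
  have := natDegree_le_of_dvd h hne
  rw [natDegree_quad c a b hc] at this
  omega

theorem quad_dvd_of_dvd_X_mul (hb : b ≠ 0) {f : ℤ[X]} (h : quad c a b ∣ X * f) :
    quad c a b ∣ f := by
  obtain ⟨k, hk⟩ := h
  obtain ⟨k', rfl⟩ : X ∣ k := by
    refine X_dvd_iff.2 ((mul_eq_zero.1 ?_).resolve_left hb)
    simpa [coeff_quad_zero] using (congrArg (coeff · 0) hk).symm
  exact ⟨k', mul_left_cancel₀ X_ne_zero (by rw [hk]; ring)⟩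

theorem quad_dvd_step_sub_divX (hb : 0 < b) {f g : ℤ[X]}
    (hg : ∀ i, g.coeff i ∈ Icc 0 (b - 1)) (h : quad c a b ∣ f - g) :
    quad c a b ∣ step c a b f - g.divX := by
  have hdigit : f.coeff 0 % b = g.coeff 0 := by
    obtain ⟨k, hk⟩ := h
    have hk₀ : f.coeff 0 = g.coeff 0 + b * k.coeff 0 := by
      simpa [coeff_quad_zero, sub_eq_iff_eq_add'] using congrArg (coeff · 0) hk
    rw [hk₀, Int.add_mul_emod_self_left, Int.emod_eq_of_lt (hg 0).1 (by linarith [(hg 0).2])]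
  refine quad_dvd_of_dvd_X_mul c a b hb.ne' ?_
  have hstep := eq_digit_add_X_mul_step c a b f
  rw [hdigit] at hstep
  have hX : X * (step c a b f - g.divX) = (f - g) - C (f.coeff 0 / b) * quad c a b := by
    linear_combination -hstep - X_mul_divX_add g
  rw [hX]
  exact dvd_sub h (dvd_mul_left _ _)

theorem quad_dvd_iterate_step_sub (hb : 0 < b) {f g : ℤ[X]}
    (hg : ∀ i, g.coeff i ∈ Icc 0 (b - 1)) (h : quad c a b ∣ f - g) (n : ℕ) :
    quad c a b ∣ (step c a b)^[n] f - divX^[n] g := by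
  induction n generalizing f g with
  | zero => exact h
  | succ n ih =>
    exact ih (fun i => by rw [coeff_divX]; exact hg (i + 1)) (quad_dvd_step_sub_divX c a b hb hg h)

theorem quad_dvd_sub_digitPoly (f : ℤ[X]) (n : ℕ) :
    quad c a b ∣ f - (digitPoly c a b n f + X ^ n * (step c a b)^[n] f) := by
  induction n with
  | zero => simp [digitPoly]
  | succ n ih =>
    have hstep := eq_digit_add_X_mul_step c a b ((step c a b)^[n] f)
    have hsplit : f - (digitPoly c a b (n + 1) f + X ^ (n + 1) * (step c a b)^[n + 1] f) =
        (f - (digitPoly c a b n f + X ^ n * (step c a b)^[n] f)) +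
          X ^ n * C (((step c a b)^[n] f).coeff 0 / b) * quad c a b := by
      rw [digitPoly, Finset.sum_range_succ, iterate_succ_apply', ← digitPoly]
      linear_combination X ^ n * hstep
    rw [hsplit]
    exact dvd_add ih (dvd_mul_left _ _)

theorem coeff_digitPoly_mem (hb : 0 < b) (f : ℤ[X]) (n i : ℕ) :
    (digitPoly c a b n f).coeff i ∈ Icc 0 (b - 1) := by
  simp only [digitPoly, finsetSum_coeff, coeff_C_mul_X_pow, Finset.sum_ite_eq, Finset.mem_range]
  split_ifs
  · exact ⟨Int.emod_nonneg _ hb.ne', Int.le_sub_one_of_lt (Int.emod_lt_of_pos _ hb)⟩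
  · exact ⟨le_rfl, by linarith⟩

theorem iterate_step_eq_zero_of_quad_dvd (hb : 0 < b) (hc : c ≠ 0) {f : ℤ[X]}
    (hf : quad c a b ∣ f) : (step c a b)^[f.natDegree] f = 0 := by
  have hzero : ∀ i, (0 : ℤ[X]).coeff i ∈ Icc 0 (b - 1) := fun i => by
    rw [coeff_zero]; exact ⟨le_rfl, by omega⟩
  refine eq_zero_of_quad_dvd c a b hc (natDegree_iterate_step_le c a b (by omega)) ?_
  have := quad_dvd_iterate_step_sub c a b hb hzero (sub_zero f ▸ hf) f.natDegree
  rwa [iterate_fixed divX_zero, sub_zero] at this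

theorem exists_digits_iff_exists_iterate_step_eq_zero (hb : 0 < b) (hc : c ≠ 0)
    (f : ℤ[X]) :
    (∃ g : ℤ[X], (∀ i, g.coeff i ∈ Icc 0 (b - 1)) ∧ quad c a b ∣ f - g) ↔
      ∃ k, (step c a b)^[k] f = 0 := by
  constructor
  · rintro ⟨g, hg, hdvd⟩
    have hdvd' := quad_dvd_iterate_step_sub c a b hb hg hdvd (g.natDegree + 1)
    rw [iterate_divX_eq_zero (Nat.lt_succ_self _), sub_zero] at hdvd'
    refine ⟨((step c a b)^[g.natDegree + 1] f).natDegree + (g.natDegree + 1), ?_⟩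
    rw [iterate_add_apply]
    exact iterate_step_eq_zero_of_quad_dvd c a b hb hc hdvd'
  · rintro ⟨k, hk⟩
    refine ⟨digitPoly c a b k f, coeff_digitPoly_mem c a b hb f k, ?_⟩
    simpa [hk] using quad_dvd_sub_digitPoly c a b f k

theorem forall_exists_iterate_step_iff (hc : c ≠ 0) :
    (∀ f : ℤ[X], ∃ k, (step c a b)^[k] f = 0) ↔
      ∀ z : ℤ × ℤ, ∃ k, (srsInt c a b)^[k] z = (0, 0) := by
  constructor
  · intro h z
    obtain ⟨k, hk⟩ := h (embed c a z)
    exact ⟨k, eq_zero_of_embed_eq_zero c a hc (iterate_step_embed c a b k z ▸ hk)⟩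
  · intro h f
    obtain ⟨n, z, hz⟩ := exists_iterate_step_eq_embed c a b f
    obtain ⟨k, hk⟩ := h z
    refine ⟨k + n, ?_⟩
    rw [iterate_add_apply, hz, iterate_step_embed, hk]
    simp [embed]

theorem exists_pos_aeval_quad_eq_zero (hc : 0 < c) (hb : b < 0) :
    ∃ θ : ℝ, 0 < θ ∧ aeval θ (quad c a b) = 0 := by
  have hcR : (0 : ℝ) < c := by exact_mod_cast hc
  have hbR : (b : ℝ) < 0 := by exact_mod_cast hb
  set s := √(discrim (c : ℝ) a b)
  have hdisc : discrim (c : ℝ) a b = s * s := by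
    rw [Real.mul_self_sqrt (by rw [discrim]; nlinarith)]
  have has : |(a : ℝ)| < s := by
    rw [Real.lt_sqrt (abs_nonneg _), sq_abs, discrim]
    nlinarith
  refine ⟨(-a + s) / (2 * c), div_pos (by linarith [le_abs_self (a : ℝ)]) (by positivity), ?_⟩
  have hroot := (quadratic_eq_zero_iff hcR.ne' hdisc ((-a + s) / (2 * c))).2 (Or.inl rfl)
  simp only [quad, map_add, map_mul, map_pow, aeval_X, eq_intCast, map_intCast]
  linear_combination hroot

theorem not_quad_dvd_neg_one_sub (hc : 0 < c) (hb : b < 0) {g : ℤ[X]}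
    (hg : ∀ i, 0 ≤ g.coeff i) : ¬ quad c a b ∣ -1 - g := by
  rintro ⟨k, hk⟩
  obtain ⟨θ, hθ, hroot⟩ := exists_pos_aeval_quad_eq_zero c a b hc hb
  have := congrArg (aeval θ) hk
  rw [map_mul, hroot, zero_mul, map_sub, map_neg, map_one] at this
  linarith [aeval_nonneg_of_coeff_nonneg hθ.le hg]

end QuadraticCNS

open QuadraticCNS

/-- `P(x) = cx² + ax + b` is a CNS polynomial (every element of
`ℤ[x]/Pℤ[x]` has a finite digit expansion in base `X` with digits
`{0, …, |b| - 1}`) if and only if `(c/b, a/b) ∈ 𝒟₂⁽⁰⁾`, i.e. every `z ∈ ℤ²` is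
eventually mapped to `(0,0)` by the shift radix map `τ_{(c/b, a/b)}`. -/
theorem stmt19 (c a b : ℤ) (hc : 1 ≤ c) (hb : b ≠ 0)
    (P : Polynomial ℤ)
    (hP : P = Polynomial.C c * X ^ 2 + Polynomial.C a * X + Polynomial.C b) :
    (∀ r : Polynomial ℤ ⧸ Ideal.span {P},
      ∃ (ℓ : ℕ) (dd : ℕ → ℤ),
        (∀ i ≤ ℓ, 0 ≤ dd i ∧ dd i ≤ |b| - 1) ∧
        r = ∑ i ∈ Finset.range (ℓ + 1),
          (dd i : Polynomial ℤ ⧸ Ideal.span {P}) *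
            (Ideal.Quotient.mk (Ideal.span {P}) X) ^ i)
    ↔ (∀ z : ℤ × ℤ, ∃ k : ℕ,
        (srsMap ((c : ℝ) / (b : ℝ)) ((a : ℝ) / (b : ℝ)))^[k] z = (0, 0)) := by
  have h0 : (0 : ℤ) ∈ Icc 0 (|b| - 1) := ⟨le_rfl, by have := abs_pos.2 hb; omega⟩
  refine (forall_exists_digit_sum_iff P h0).trans ?_
  subst hP
  rcases hb.lt_or_gt with hb | hb
  · refine iff_of_false (fun h => ?_) (not_forall_exists_iterate_srsMap_eq_zero
      (div_neg_of_pos_of_neg (by exact_mod_cast hc) (by exact_mod_cast hb)))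
    obtain ⟨g, hg, hdvd⟩ := h (-1)
    exact not_quad_dvd_neg_one_sub c a b (by omega) hb (fun i => (hg i).1) hdvd
  · rw [srsMap_div_eq_srsInt c a b hb, ← forall_exists_iterate_step_iff c a b (by omega : c ≠ 0),
      abs_of_pos hb]
    exact forall_congr' (exists_digits_iff_exists_iterate_step_eq_zero c a b hb (by omega))
end
end
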